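/- arXiv:2604.24418 — 11 statements merged into one kernel-verified Lean document; each statement's English description precedes it below -/
import Mathlib

section
/- Let ν > 0, β > 0, λ ∈ ℝ, and let v : ℝ × ℝ → ℝ be twice continuously differentiable on {(z,t) : z > 0, t > 0} and satisfy β v_t = v_zz + (ν/z) v_z there. Define w(z,t) = (1+λt)^{-(1+ν)/2} · exp(−βλz²/(4(1+λt))) · v(z/(1+λt),ت t/(1+λt)). Then w satisfies β w_t = w_zz + (ν/z) w_z at every point (z,t) with z > 0, t > 0 and 1 + λt > 0. -/
private lemma clm_eval (L : ℝ × ℝ →L[ℝ] ℝ) (a b : ℝ) :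
    L (a, b) = a * L (1, 0) + b * L (0, 1) := by
  have h : ((a, b) : ℝ × ℝ) = a • ((1:ℝ), (0:ℝ)) + b • ((0:ℝ), (1:ℝ)) := by
    simp [Prod.ext_iff]
  rw [h, map_add, map_smul, map_smul, smul_eq_mul, smul_eq_mul]

set_option maxHeartbeats 1000000 in
/-- The one-parameter projective transformation group generated by
`Ỹ₁ = tz∂_z + t²∂_t − (βz²/4 + (1+ν)t/2) v ∂_v` maps solutions of the linear radial
heat equation `β v_t = v_zz + (ν/z) v_z` to solutions. -/
theorem stmt1 (ν β lam : ℝ) (hν : 0 < ν) (hβ : 0 < β)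
    (v : ℝ → ℝ → ℝ)
    (hv : ContDiffOn ℝ 2 (fun p : ℝ × ℝ => v p.1 p.2) {p : ℝ × ℝ | 0 < p.1 ∧ 0 < p.2})
    (hpde : ∀ z t : ℝ, 0 < z → 0 < t →
      β * deriv (fun t' => v z t') t =
        deriv (deriv fun z' => v z' t) z + (ν / z) * deriv (fun z' => v z' t) z)
    (w : ℝ → ℝ → ℝ)
    (hw : ∀ z t : ℝ, w z t =
      (1 + lam * t) ^ (-(1 + ν) / 2) *
        Real.exp (-(β * lam * z ^ 2) / (4 * (1 + lam * t))) *
        v (z / (1 + lam * t)) (t / (1 + lam * t))) :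
    ∀ z t : ℝ, 0 < z → 0 < t → 0 < 1 + lam * t →
      β * deriv (fun t' => w z t') t =
        deriv (deriv fun z' => w z' t) z + (ν / z) * deriv (fun z' => w z' t) z := by
  set U : Set (ℝ × ℝ) := {p : ℝ × ℝ | 0 < p.1 ∧ 0 < p.2} with hUdef
  have hU : IsOpen U :=
    (isOpen_lt continuous_const continuous_fst).inter (isOpen_lt continuous_const continuous_snd)
  set V : ℝ × ℝ → ℝ := fun p => v p.1 p.2 with hVdef
  set F := fderiv ℝ V with hFdef
  have hVd : ∀ p ∈ U, HasFDerivAt V (F p) p := by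
    intro p hp
    exact ((hv.differentiableOn two_ne_zero).differentiableAt (hU.mem_nhds hp)).hasFDerivAt
  have hF1 : ContDiffOn ℝ 1 F U := hv.fderiv_of_isOpen hU (by norm_num)
  have hFd : ∀ p ∈ U, DifferentiableAt ℝ F p := fun p hp =>
    (hF1.differentiableOn one_ne_zero).differentiableAt (hU.mem_nhds hp)
  set v1 : ℝ × ℝ → ℝ := fun p => F p (1, 0) with hv1def
  set v2 : ℝ × ℝ → ℝ := fun p => F p (0, 1) with hv2def
  set v11 : ℝ × ℝ → ℝ := fun p => fderiv ℝ v1 p (1, 0) with hv11def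
  have h1 : ∀ p ∈ U, HasDerivAt (fun z' => v z' p.2) (v1 p) p.1 := by
    intro p hp
    have hline : HasDerivAt (fun z' : ℝ => ((z', p.2) : ℝ × ℝ)) (1, 0) p.1 :=
      (hasDerivAt_id p.1).prodMk (hasDerivAt_const p.1 p.2)
    have hV : HasFDerivAt V (F p) (p.1, p.2) := by simpa using hVd p hp
    exact hV.comp_hasDerivAt p.1 hline
  have h2 : ∀ p ∈ U, HasDerivAt (fun t' => v p.1 t') (v2 p) p.2 := by
    intro p hp
    have hline : HasDerivAt (fun t' : ℝ => ((p.1, t') : ℝ × ℝ)) (0, 1) p.2 :=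
      (hasDerivAt_const p.2 p.1).prodMk (hasDerivAt_id p.2)
    have hV : HasFDerivAt V (F p) (p.1, p.2) := by simpa using hVd p hp
    exact hV.comp_hasDerivAt p.2 hline
  have h11 : ∀ p ∈ U, HasDerivAt (fun z' => v1 (z', p.2)) (v11 p) p.1 := by
    intro p hp
    have hd : HasFDerivAt v1 (fderiv ℝ v1 p) p :=
      (((hFd p hp).clm_apply (differentiableAt_const ((1:ℝ),(0:ℝ))))).hasFDerivAt
    have hline : HasDerivAt (fun z' : ℝ => ((z', p.2) : ℝ × ℝ)) (1, 0) p.1 :=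
      (hasDerivAt_id p.1).prodMk (hasDerivAt_const p.1 p.2)
    have hd' : HasFDerivAt v1 (fderiv ℝ v1 p) (p.1, p.2) := by simpa using hd
    exact hd'.comp_hasDerivAt p.1 hline
  have hpde' : ∀ p ∈ U, β * v2 p = v11 p + (ν / p.1) * v1 p := by
    intro p hp
    have h := hpde p.1 p.2 hp.1 hp.2
    rw [(h2 p hp).deriv, (h1 p hp).deriv] at h
    have hop : IsOpen {z' : ℝ | ((z', p.2) : ℝ × ℝ) ∈ U} :=
      hU.preimage (continuous_id.prodMk continuous_const)
    have hp' : ((p.1, p.2) : ℝ × ℝ) ∈ U := by simpa using hp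
    have hev : (deriv fun z' => v z' p.2) =ᶠ[nhds p.1] fun z' => v1 (z', p.2) := by
      filter_upwards [hop.mem_nhds hp'] with z' hz'
      exact (h1 (z', p.2) hz').deriv
    rw [hev.deriv_eq, (h11 p hp).deriv] at h
    exact h
  -- main computation
  intro z t hz ht hA
  set A : ℝ := 1 + lam * t with hAdef
  set c : ℝ := -(1 + ν) / 2 with hcdef
  have hq : ((z / A, t / A) : ℝ × ℝ) ∈ U := ⟨div_pos hz hA, div_pos ht hA⟩
  have hqmem : ∀ x : ℝ, 0 < x → ((x / A, t / A) : ℝ × ℝ) ∈ U :=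
    fun x hx => ⟨div_pos hx hA, div_pos ht hA⟩
  have hfun : (fun x => w x t) =
      fun x => A ^ c * Real.exp (-(β * lam * x ^ 2) / (4 * A)) * v (x / A) (t / A) :=
    funext fun x => hw x t
  have hfunt : (fun t' => w z t') = fun t' => (1 + lam * t') ^ c *
      Real.exp (-(β * lam * z ^ 2) / (4 * (1 + lam * t'))) *
      v (z / (1 + lam * t')) (t' / (1 + lam * t')) := funext fun t' => hw z t'
  set W1 : ℝ → ℝ := fun x => A ^ c * Real.exp (-(β * lam * x ^ 2) / (4 * A)) *
      (-(β * lam * x) / (2 * A) * v (x / A) (t / A) + 1 / A * v1 (x / A, t / A)) with hW1def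
  have hE : ∀ x : ℝ, HasDerivAt (fun y : ℝ => Real.exp (-(β * lam * y ^ 2) / (4 * A)))
      (Real.exp (-(β * lam * x ^ 2) / (4 * A)) * (-(β * lam * x) / (2 * A))) x := by
    intro x
    have hin : HasDerivAt (fun y : ℝ => -(β * lam * y ^ 2) / (4 * A))
        (-(β * lam * x) / (2 * A)) x := by
      have h0 : HasDerivAt (fun y : ℝ => -(β * lam * y ^ 2)) (-(β * lam * (2 * x))) x := by
        simpa [mul_comm, mul_assoc, mul_left_comm] using
          (((hasDerivAt_pow 2 x).const_mul (β * lam)).fun_neg)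
      have := h0.div_const (4 * A)
      refine this.congr_deriv ?_
      field_simp
      ring
    simpa using hin.exp
  have hvc : ∀ x : ℝ, 0 < x →
      HasDerivAt (fun y : ℝ => v (y / A) (t / A)) (1 / A * v1 (x / A, t / A)) x := by
    intro x hx
    have hs : HasDerivAt (fun y : ℝ => y / A) (1 / A) x := (hasDerivAt_id x).div_const A
    have := (h1 (x / A, t / A) (hqmem x hx)).comp x hs
    simpa [mul_comm, Function.comp_def] using this
  have hW1d : ∀ x : ℝ, 0 < x → HasDerivAt (fun y => w y t) (W1 x) x := by
    intro x hx
    have h0 := ((hE x).fun_mul (hvc x hx)).const_mul (A ^ c)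
    have hfe : (fun y => A ^ c * (Real.exp (-(β * lam * y ^ 2) / (4 * A)) * v (y / A) (t / A)))
        = fun y => A ^ c * Real.exp (-(β * lam * y ^ 2) / (4 * A)) * v (y / A) (t / A) := by
      funext y; ring
    rw [hfe] at h0
    rw [hfun]
    refine h0.congr_deriv ?_
    simp only [hW1def]
    ring
  have hv1c : HasDerivAt (fun y : ℝ => v1 (y / A, t / A)) (1 / A * v11 (z / A, t / A)) z := by
    have hs : HasDerivAt (fun y : ℝ => y / A) (1 / A) z := (hasDerivAt_id z).div_const A
    have := (h11 (z / A, t / A) hq).comp z hs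
    simpa [mul_comm, Function.comp_def] using this
  have hlinz : HasDerivAt (fun y : ℝ => -(β * lam * y) / (2 * A)) (-(β * lam) / (2 * A)) z := by
    have h0 : HasDerivAt (fun y : ℝ => -(β * lam * y)) (-(β * lam)) z := by
      simpa using (((hasDerivAt_id z).const_mul (β * lam)).fun_neg)
    simpa using h0.div_const (2 * A)
  have hg : HasDerivAt
      (fun y => -(β * lam * y) / (2 * A) * v (y / A) (t / A) + 1 / A * v1 (y / A, t / A))
      ((-(β * lam) / (2 * A) * v (z / A) (t / A)
        + -(β * lam * z) / (2 * A) * (1 / A * v1 (z / A, t / A)))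
        + 1 / A * (1 / A * v11 (z / A, t / A))) z :=
    (hlinz.mul (hvc z hz)).add (hv1c.const_mul (1 / A))
  set D2 : ℝ := A ^ c * Real.exp (-(β * lam * z ^ 2) / (4 * A)) *
      ((β * lam * z / (2 * A)) ^ 2 * v (z / A) (t / A) - β * lam / (2 * A) * v (z / A) (t / A)
        - β * lam * z / A ^ 2 * v1 (z / A, t / A)
        + 1 / A ^ 2 * v11 (z / A, t / A)) with hD2def
  have hW1deriv : HasDerivAt W1 D2 z := by
    have h0 := ((hE z).fun_mul hg).const_mul (A ^ c)
    have hfe : (fun y => A ^ c * (Real.exp (-(β * lam * y ^ 2) / (4 * A)) *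
        (-(β * lam * y) / (2 * A) * v (y / A) (t / A) + 1 / A * v1 (y / A, t / A))))
        = W1 := by
      funext y; simp only [hW1def]; ring
    rw [hfe] at h0
    refine h0.congr_deriv ?_
    rw [hD2def]
    field_simp
    ring
  have hd1 : deriv (fun y => w y t) z = W1 z := (hW1d z hz).deriv
  have hd2 : deriv (deriv fun y => w y t) z = D2 := by
    have hev : (deriv fun y => w y t) =ᶠ[nhds z] W1 := by
      filter_upwards [Ioi_mem_nhds hz] with x hx
      exact (hW1d x hx).deriv
    rw [hev.deriv_eq, hW1deriv.deriv]
  -- t-derivative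
  have hlin : HasDerivAt (fun t' : ℝ => 1 + lam * t') lam t := by
    simpa using (((hasDerivAt_id t).const_mul lam).const_add 1)
  have hP : HasDerivAt (fun t' : ℝ => (1 + lam * t') ^ c) (c * A ^ (c - 1) * lam) t := by
    have h0 := (Real.hasDerivAt_rpow_const (p := c) (Or.inl hA.ne')).comp t hlin
    simpa [mul_comm, mul_assoc, Function.comp_def] using h0
  have hEt : HasDerivAt (fun t' : ℝ => Real.exp (-(β * lam * z ^ 2) / (4 * (1 + lam * t'))))
      (Real.exp (-(β * lam * z ^ 2) / (4 * A)) *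
        ((0 * (4 * A) - -(β * lam * z ^ 2) * (4 * lam)) / (4 * A) ^ 2)) t := by
    have hden : HasDerivAt (fun t' : ℝ => 4 * (1 + lam * t')) (4 * lam) t := hlin.const_mul 4
    have hdiv := (hasDerivAt_const t (-(β * lam * z ^ 2))).div hden (by positivity)
    simpa using hdiv.exp
  have hγ1 : HasDerivAt (fun t' : ℝ => z / (1 + lam * t'))
      ((0 * A - z * lam) / A ^ 2) t := (hasDerivAt_const t z).div hlin hA.ne'
  have hγ2 : HasDerivAt (fun t' : ℝ => t' / (1 + lam * t'))
      ((1 * A - t * lam) / A ^ 2) t := (hasDerivAt_id t).div hlin hA.ne'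
  have hvt : HasDerivAt (fun t' : ℝ => v (z / (1 + lam * t')) (t' / (1 + lam * t')))
      ((0 * A - z * lam) / A ^ 2 * v1 (z / A, t / A)
        + (1 * A - t * lam) / A ^ 2 * v2 (z / A, t / A)) t := by
    have hγ := hγ1.prodMk hγ2
    have hV : HasFDerivAt V (F (z / A, t / A)) (z / (1 + lam * t), t / (1 + lam * t)) :=
      hVd _ hq
    have h0 := hV.comp_hasDerivAt t hγ
    have heval := clm_eval (F (z / A, t / A)) ((0 * A - z * lam) / A ^ 2)
      ((1 * A - t * lam) / A ^ 2)
    rw [heval] at h0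
    exact h0
  set Dt : ℝ := (c * A ^ (c - 1) * lam * Real.exp (-(β * lam * z ^ 2) / (4 * A))
      + A ^ c * (Real.exp (-(β * lam * z ^ 2) / (4 * A)) *
          ((0 * (4 * A) - -(β * lam * z ^ 2) * (4 * lam)) / (4 * A) ^ 2)))
        * v (z / A) (t / A)
      + A ^ c * Real.exp (-(β * lam * z ^ 2) / (4 * A)) *
          ((0 * A - z * lam) / A ^ 2 * v1 (z / A, t / A)
            + (1 * A - t * lam) / A ^ 2 * v2 (z / A, t / A)) with hDtdef
  have hwt : HasDerivAt (fun t' => w z t') Dt t := by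
    rw [hfunt]
    have h0 := (hP.fun_mul hEt).fun_mul hvt
    exact h0
  -- endgame
  rw [hwt.deriv, hd2, hd1]
  have key : β * v2 (z / A, t / A) =
      v11 (z / A, t / A) + (ν / (z / A)) * v1 (z / A, t / A) := hpde' _ hq
  have hrp : A ^ (c - 1) * A = A ^ c := by
    rw [Real.rpow_sub_one hA.ne']
    field_simp
  simp only [hW1def, hD2def, hDtdef]
  clear_value A c
  set E : ℝ := Real.exp (-(β * lam * z ^ 2) / (4 * A)) with hE0
  clear_value E
  set P : ℝ := A ^ c with hP0
  set P' : ℝ := A ^ (c - 1) with hP'0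
  clear_value P P'
  set b0 : ℝ := v (z / A) (t / A) with hb0
  set b1 : ℝ := v1 (z / A, t / A) with hb1
  set b2 : ℝ := v2 (z / A, t / A) with hb2
  set b11 : ℝ := v11 (z / A, t / A) with hb11
  clear_value b0 b1 b2 b11
  have hAne : A ≠ 0 := hA.ne'
  have hzne : z ≠ 0 := hz.ne'
  have hA1 : 1 * A - t * lam = 1 := by rw [hAdef]; ring
  field_simp at key
  have hP'eq : P' = P / A := by
    field_simp
    linear_combination hrp
  have hb2' : b2 = (b11 * z + ν * A * b1) / (β * z) := by
    rw [eq_div_iff (by positivity)]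
    linear_combination key
  rw [hcdef, hP'eq, hA1, hb2']
  field_simp
  ring
end

section
/- Let β > 0, λ ∈ ℝ, and let v : ℝ × ℝ → ℝ be twice continuously differentiable on {(z,t) : z > 0, t > 0} and satisfy β v_t = v_zz + (2/z) v_z there. Define w(z,t) = ((z−λt)/z) · exp(−βλ(z−λt)/2 − βλ²t/4) · v(z−λt, t). Then w satisfies β w_t = w_zz + (2/z) w_z at every point (z,t) with z > 0, t > 0 and z − λt > 0. -/
/-- Auxiliary: the first `z`-derivative of the transformed function. -/
noncomputable def W1aux (β lam t : ℝ) (v : ℝ → ℝ → ℝ) : ℝ → ℝ := fun y =>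
  Real.exp (-(β * lam * (y - lam * t)) / 2 - β * lam ^ 2 * t / 4) *
    ((lam * t / y ^ 2 - β * lam / 2 * ((y - lam * t) / y)) * v (y - lam * t) t +
      (y - lam * t) / y * deriv (fun x => v x t) (y - lam * t))

/-- In the spherical case `ν = 2`, the one-parameter Galilean-type
transformation group generated by `Ŷ₄ = t∂_z − (βz/2 + t/z) v ∂_v` maps solutions of
`β v_t = v_zz + (2/z) v_z` to solutions. -/
theorem stmt2 (β lam : ℝ) (hβ : 0 < β)
    (v : ℝ → ℝ → ℝ)
    (hv : ContDiffOn ℝ 2 (fun p : ℝ × ℝ => v p.1 p.2) {p : ℝ × ℝ | 0 < p.1 ∧ 0 < p.2})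
    (hpde : ∀ z t : ℝ, 0 < z → 0 < t →
      β * deriv (fun t' => v z t') t =
        deriv (deriv fun z' => v z' t) z + (2 / z) * deriv (fun z' => v z' t) z)
    (w : ℝ → ℝ → ℝ)
    (hw : ∀ z t : ℝ, w z t =
      ((z - lam * t) / z) *
        Real.exp (-(β * lam * (z - lam * t)) / 2 - β * lam ^ 2 * t / 4) *
        v (z - lam * t) t) :
    ∀ z t : ℝ, 0 < z → 0 < t → 0 < z - lam * t →
      β * deriv (fun t' => w z t') t =
        deriv (deriv fun z' => w z' t) z + (2 / z) * deriv (fun z' => w z' t) z := by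
  intro z t hz ht hst
  have hSopen : IsOpen {p : ℝ × ℝ | 0 < p.1 ∧ 0 < p.2} :=
    (isOpen_lt continuous_const continuous_fst).inter (isOpen_lt continuous_const continuous_snd)
  -- joint regularity at points of S
  have hVat : ∀ x τ : ℝ, 0 < x → 0 < τ →
      ContDiffAt ℝ 2 (fun p : ℝ × ℝ => v p.1 p.2) (x, τ) := fun x τ hx hτ =>
    hv.contDiffAt (hSopen.mem_nhds ⟨hx, hτ⟩)
  -- slice regularity in z
  have hg : ∀ x : ℝ, 0 < x → ContDiffAt ℝ 2 (fun x => v x t) x := by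
    intro x hx
    exact (hVat x t hx ht).comp x (ContDiffAt.prodMk contDiffAt_id contDiffAt_const)
  have hg1 : ∀ x : ℝ, 0 < x → HasDerivAt (fun x => v x t) (deriv (fun x => v x t) x) x :=
    fun x hx => ((hg x hx).differentiableAt (by norm_num)).hasDerivAt
  have hderiv_diff : ∀ x : ℝ, 0 < x → DifferentiableAt ℝ (deriv (fun x => v x t)) x := by
    intro x hx
    have h1 : ContDiffAt ℝ 1 (fderiv ℝ (fun x => v x t)) x :=
      (hg x hx).fderiv_right (by norm_num)
    exact (h1.differentiableAt one_ne_zero).clm_apply (differentiableAt_const 1)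
  -- fderiv at (z - lam*t, t)
  have hVd : HasFDerivAt (fun p : ℝ × ℝ => v p.1 p.2)
      (fderiv ℝ (fun p : ℝ × ℝ => v p.1 p.2) (z - lam * t, t)) (z - lam * t, t) :=
    ((hVat _ t hst ht).differentiableAt (by norm_num)).hasFDerivAt
  have h10 : HasDerivAt (fun x => v x t)
      (fderiv ℝ (fun p : ℝ × ℝ => v p.1 p.2) (z - lam * t, t) (1, 0)) (z - lam * t) :=
    by have := hVd.comp_hasDerivAt (z - lam * t) (HasDerivAt.prodMk (hasDerivAt_id (z - lam * t)) (hasDerivAt_const (z - lam * t) t)); exact this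
  have h01 : HasDerivAt (fun t' => v (z - lam * t) t')
      (fderiv ℝ (fun p : ℝ × ℝ => v p.1 p.2) (z - lam * t, t) (0, 1)) t :=
    hVd.comp_hasDerivAt t (HasDerivAt.prodMk (hasDerivAt_const t (z - lam * t)) (hasDerivAt_id t))
  have ka : HasDerivAt (fun t' : ℝ => z - lam * t') (-lam) t := by
    simpa using (HasDerivAt.const_sub z ((hasDerivAt_id t).const_mul lam))
  have hcurve : HasDerivAt (fun t' : ℝ => (z - lam * t', t')) ((-lam : ℝ), (1 : ℝ)) t :=
    ka.prodMk (hasDerivAt_id t)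
  have hml0 := HasFDerivAt.comp_hasDerivAt (f := fun t' : ℝ => (z - lam * t', t')) t hVd hcurve
  have hml : HasDerivAt (fun t' => v (z - lam * t') t')
      (fderiv ℝ (fun p : ℝ × ℝ => v p.1 p.2) (z - lam * t, t) (-lam, 1)) t := hml0
  have hFml : fderiv ℝ (fun p : ℝ × ℝ => v p.1 p.2) (z - lam * t, t) (-lam, 1)
      = -lam * deriv (fun x => v x t) (z - lam * t)
        + fderiv ℝ (fun p : ℝ × ℝ => v p.1 p.2) (z - lam * t, t) (0, 1) := by
    have hsplit : ((-lam, 1) : ℝ × ℝ) = (-lam) • ((1 : ℝ), (0 : ℝ)) + ((0 : ℝ), (1 : ℝ)) := by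
      simp [Prod.ext_iff]
    rw [hsplit, map_add, map_smul, smul_eq_mul, h10.deriv]
  -- PDE at the shifted point
  have key := hpde (z - lam * t) t hst ht
  rw [h01.deriv] at key
  have hD : fderiv ℝ (fun p : ℝ × ℝ => v p.1 p.2) (z - lam * t, t) (0, 1)
      = (deriv (deriv fun z' => v z' t) (z - lam * t)
          + 2 / (z - lam * t) * deriv (fun z' => v z' t) (z - lam * t)) / β := by
    rw [eq_div_iff hβ.ne']
    linarith [key]
  -- first z-derivative of w, on a neighbourhood
  have hW1 : ∀ y : ℝ, 0 < y → 0 < y - lam * t →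
      HasDerivAt (fun z' => w z' t) (W1aux β lam t v y) y := by
    intro y hy hsy
    have hfun : (fun z' => w z' t) = fun y =>
        (y - lam * t) / y * Real.exp (-(β * lam * (y - lam * t)) / 2 - β * lam ^ 2 * t / 4)
          * v (y - lam * t) t := by
      funext y; rw [hw]
    rw [hfun]
    have h1 : HasDerivAt (fun y : ℝ => (y - lam * t) / y)
        ((1 * y - (y - lam * t) * 1) / y ^ 2) y :=
      ((hasDerivAt_id y).sub_const (lam * t)).div (hasDerivAt_id y) hy.ne'
    have b2 : HasDerivAt (fun x : ℝ => -(β * lam * (x - lam * t)) / 2 - β * lam ^ 2 * t / 4)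
        (-(β * lam * 1) / 2) y :=
      HasDerivAt.sub_const
        (β * lam ^ 2 * t / 4)
        ((((hasDerivAt_id y).sub_const (lam * t)).const_mul (β * lam)).neg.div_const 2)
    have h2 := b2.exp
    have h3 : HasDerivAt (fun x => v x t) (deriv (fun x => v x t) (y - lam * t)) (y - lam * t) :=
      hg1 _ hsy
    have h3' := h3.comp y ((hasDerivAt_id y).sub_const (lam * t))
    exact ((h1.mul h2).mul h3').congr_deriv (by unfold W1aux; simp only [Function.comp_def, id_eq, Pi.mul_apply]; ring)
  -- second z-derivative of w
  have hmem : {y : ℝ | 0 < y ∧ 0 < y - lam * t} ∈ nhds z := by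
    have hopen : IsOpen {y : ℝ | 0 < y ∧ 0 < y - lam * t} :=
      (isOpen_lt continuous_const continuous_id).inter
        (isOpen_lt continuous_const (continuous_id.sub continuous_const))
    exact hopen.mem_nhds ⟨hz, hst⟩
  have hev : (deriv fun z' => w z' t) =ᶠ[nhds z] W1aux β lam t v := by
    filter_upwards [hmem] with y hy using (hW1 y hy.1 hy.2).deriv
  have h2z : deriv (deriv fun z' => w z' t) z = deriv (W1aux β lam t v) z := hev.deriv_eq
  -- derivative of W1aux at z
  have cE : HasDerivAt
      (fun y : ℝ => Real.exp (-(β * lam * (y - lam * t)) / 2 - β * lam ^ 2 * t / 4))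
      (Real.exp (-(β * lam * (z - lam * t)) / 2 - β * lam ^ 2 * t / 4) * (-(β * lam * 1) / 2))
      z :=
    (HasDerivAt.sub_const
      (β * lam ^ 2 * t / 4)
      ((((hasDerivAt_id z).sub_const (lam * t)).const_mul (β * lam)).neg.div_const 2)).exp
  have cR : HasDerivAt (fun y : ℝ => (y - lam * t) / y)
      ((1 * z - (z - lam * t) * 1) / z ^ 2) z :=
    ((hasDerivAt_id z).sub_const (lam * t)).div (hasDerivAt_id z) hz.ne'
  have cQ := (((hasDerivAt_const z (lam * t)).div (hasDerivAt_pow 2 z)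
      (pow_ne_zero 2 hz.ne')).sub (cR.const_mul (β * lam / 2)))
  have cA : HasDerivAt (fun y : ℝ => v (y - lam * t) t)
      (deriv (fun x => v x t) (z - lam * t) * 1) z :=
    by have := (hg1 _ hst).comp z ((hasDerivAt_id z).sub_const (lam * t)); exact this
  have cBd : HasDerivAt (deriv fun x => v x t)
      (deriv (deriv fun x => v x t) (z - lam * t)) (z - lam * t) :=
    (hderiv_diff _ hst).hasDerivAt
  have cB : HasDerivAt (fun y : ℝ => deriv (fun x => v x t) (y - lam * t))
      (deriv (deriv fun x => v x t) (z - lam * t) * 1) z :=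
    by have := cBd.comp z ((hasDerivAt_id z).sub_const (lam * t)); exact this
  have cW : HasDerivAt (W1aux β lam t v)
      (Real.exp (-(β * lam * (z - lam * t)) / 2 - β * lam ^ 2 * t / 4) * (-(β * lam) / 2) *
          ((lam * t / z ^ 2 - β * lam / 2 * ((z - lam * t) / z)) * v (z - lam * t) t +
            (z - lam * t) / z * deriv (fun x => v x t) (z - lam * t))
        + Real.exp (-(β * lam * (z - lam * t)) / 2 - β * lam ^ 2 * t / 4) *
          ((-(lam * t * (2 * z)) / (z ^ 2) ^ 2 - β * lam / 2 * (lam * t / z ^ 2)) *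
              v (z - lam * t) t
            + (lam * t / z ^ 2 - β * lam / 2 * ((z - lam * t) / z)) *
              deriv (fun x => v x t) (z - lam * t)
            + lam * t / z ^ 2 * deriv (fun x => v x t) (z - lam * t)
            + (z - lam * t) / z * deriv (deriv fun x => v x t) (z - lam * t))) z := by
    refine HasDerivAt.congr_deriv (cE.mul ((cQ.mul cA).add (cR.mul cB))) ?_
    push_cast
    simp only [Pi.sub_apply, Pi.div_apply]
    ring
  -- t-derivative of w
  have hfun_t : (fun t' => w z t') = (fun t' =>
      (z - lam * t') / z *
        Real.exp (-(β * lam * (z - lam * t')) / 2 - β * lam ^ 2 * t' / 4) *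
        v (z - lam * t') t') := by
    funext t'; rw [hw]
  have kd : HasDerivAt (fun t' : ℝ => (z - lam * t') / z) (-lam / z) t := ka.div_const z
  have kb : HasDerivAt (fun t' : ℝ => -(β * lam * (z - lam * t')) / 2 - β * lam ^ 2 * t' / 4)
      (-(β * lam * -lam) / 2 - β * lam ^ 2 * 1 / 4) t :=
    ((ka.const_mul (β * lam)).neg.div_const 2).sub
      (((hasDerivAt_id t).const_mul (β * lam ^ 2)).div_const 4)
  have kc := kb.exp
  have kt : HasDerivAt (fun t' =>
      (z - lam * t') / z *
        Real.exp (-(β * lam * (z - lam * t')) / 2 - β * lam ^ 2 * t' / 4) *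
        v (z - lam * t') t')
      (Real.exp (-(β * lam * (z - lam * t)) / 2 - β * lam ^ 2 * t / 4) *
        ((-lam / z + (z - lam * t) / z * (β * lam ^ 2 / 4)) * v (z - lam * t) t
          + (z - lam * t) / z *
            fderiv ℝ (fun p : ℝ × ℝ => v p.1 p.2) (z - lam * t, t) (-lam, 1))) t := by
    refine HasDerivAt.congr_deriv ((kd.mul kc).mul hml) (by simp only [Pi.mul_apply]; ring)
  -- assemble
  rw [hfun_t, kt.deriv, h2z, cW.deriv, (hW1 z hz hst).deriv]
  unfold W1aux
  rw [hFml, hD]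
  have hE := Real.exp_pos (-(β * lam * (z - lam * t)) / 2 - β * lam ^ 2 * t / 4)
  field_simp
  ring
end

section
/- Let ν > 0 with ν ≠ 1, β > 0, c₁, c₂ ∈ ℝ. Define v(z,t) = t^{−(1+ν)/2} · exp(−βz²/(4t)) · ( c₁ + c₂ (z/t)^{1−ν}/(1−ν) ) for z > 0, t > 0. Then v satisfies the linear radial heat equation β v_t = v_zz + (ν/z) v_z at every point (z,t) with z > 0, t > 0. -/
open Real Filter


/-- The invariant solution associated with the projective generator
`Ỹ₁`, for `ν ≠ 1`, namely `v(z,t) = t^{−(1+ν)/2} exp(−βz²/(4t)) (c₁ + c₂ (z/t)^{1−ν}/(1−ν))`,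
solves the linear radial heat equation `β v_t = v_zz + (ν/z) v_z` for `z, t > 0`. -/
theorem stmt5 (ν β c₁ c₂ : ℝ) (hν : 0 < ν) (hν1 : ν ≠ 1) (hβ : 0 < β)
    (v : ℝ → ℝ → ℝ)
    (hv : ∀ z t : ℝ, 0 < z → 0 < t →
      v z t = t ^ (-(1 + ν) / 2) * Real.exp (-(β * z ^ 2) / (4 * t)) *
        (c₁ + c₂ * (z / t) ^ (1 - ν) / (1 - ν))) :
    ∀ z t : ℝ, 0 < z → 0 < t →
      β * deriv (fun t' => v z t') t =
        deriv (deriv fun z' => v z' t) z + (ν / z) * deriv (fun z' => v z' t) z := by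
  intro z t hz ht
  set a : ℝ := -(1 + ν) / 2 with ha
  set p : ℝ := 1 - ν with hp
  set b : ℝ := a - p with hb
  set K : ℝ := c₂ / (1 - ν) with hK
  set W : ℝ → ℝ → ℝ := fun x s =>
    Real.exp (-(β * x ^ 2) / (4 * s)) * (c₁ * s ^ a + K * x ^ p * s ^ b) with hW
  have hvW : ∀ x s : ℝ, 0 < x → 0 < s → v x s = W x s := by
    intro x s hx hs
    rw [hv x s hx hs, hW]
    have h1 : (x / s) ^ p = x ^ p * s ^ (-p) := by
      rw [Real.div_rpow hx.le hs.le, Real.rpow_neg hs.le, div_eq_mul_inv]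
    have h2 : s ^ b = s ^ a * s ^ (-p) := by
      rw [← Real.rpow_add hs]; ring_nf; rfl
    simp only [hp] at h1 ⊢
    rw [h1, h2, hK]
    ring
  -- first z-derivative
  have hzd1 : ∀ x : ℝ, 0 < x → HasDerivAt (fun y => W y t)
      (Real.exp (-(β * x ^ 2) / (4 * t)) *
        (-(β / (4 * t)) * (2 * x) * (c₁ * t ^ a + K * x ^ p * t ^ b)
          + K * (p * x ^ (p - 1)) * t ^ b)) x := by
    intro x hx
    have hin : HasDerivAt (fun y : ℝ => -(β * y ^ 2) / (4 * t)) (-(β / (4 * t)) * (2 * x)) x := by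
      have hfe : (fun y : ℝ => -(β * y ^ 2) / (4 * t)) = fun y => -(β / (4 * t)) * y ^ 2 := by
        funext y; ring
      rw [hfe]
      have h := (hasDerivAt_pow 2 x).const_mul (-(β / (4 * t)))
      refine h.congr_deriv ?_
      push_cast; ring
    have hE : HasDerivAt (fun y : ℝ => Real.exp (-(β * y ^ 2) / (4 * t)))
        (Real.exp (-(β * x ^ 2) / (4 * t)) * (-(β / (4 * t)) * (2 * x))) x := hin.exp
    have hP : HasDerivAt (fun y : ℝ => c₁ * t ^ a + K * y ^ p * t ^ b)
        (K * (p * x ^ (p - 1)) * t ^ b) x := by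
      have h := ((Real.hasDerivAt_rpow_const (x := x) (p := p) (Or.inl hx.ne')).const_mul
        K).mul_const (t ^ b)
      exact h.const_add (c₁ * t ^ a)
    have := hE.mul hP
    refine this.congr_deriv ?_
    ring
  have hdv1 : ∀ x : ℝ, 0 < x → deriv (fun y => v y t) x =
      Real.exp (-(β * x ^ 2) / (4 * t)) *
        (-(β / (4 * t)) * (2 * x) * (c₁ * t ^ a + K * x ^ p * t ^ b)
          + K * (p * x ^ (p - 1)) * t ^ b) := by
    intro x hx
    have hev : (fun y => v y t) =ᶠ[nhds x] fun y => W y t := by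
      filter_upwards [eventually_gt_nhds hx] with y hy
      exact hvW y t hy ht
    rw [hev.deriv_eq, (hzd1 x hx).deriv]
  -- second z-derivative
  have hzd2 : HasDerivAt (fun x => Real.exp (-(β * x ^ 2) / (4 * t)) *
        (-(β / (4 * t)) * (2 * x) * (c₁ * t ^ a + K * x ^ p * t ^ b)
          + K * (p * x ^ (p - 1)) * t ^ b))
      (Real.exp (-(β * z ^ 2) / (4 * t)) * (-(β / (4 * t)) * (2 * z)) *
        (-(β / (4 * t)) * (2 * z) * (c₁ * t ^ a + K * z ^ p * t ^ b)
          + K * (p * z ^ (p - 1)) * t ^ b)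
       + Real.exp (-(β * z ^ 2) / (4 * t)) *
        ((-(β / (4 * t)) * 2) * (c₁ * t ^ a + K * z ^ p * t ^ b)
          + (-(β / (4 * t)) * (2 * z)) * (K * (p * z ^ (p - 1)) * t ^ b)
          + K * (p * ((p - 1) * z ^ (p - 1 - 1))) * t ^ b)) z := by
    have hin : HasDerivAt (fun y : ℝ => -(β * y ^ 2) / (4 * t)) (-(β / (4 * t)) * (2 * z)) z := by
      have hfe : (fun y : ℝ => -(β * y ^ 2) / (4 * t)) = fun y => -(β / (4 * t)) * y ^ 2 := by
        funext y; ring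
      rw [hfe]
      have h := (hasDerivAt_pow 2 z).const_mul (-(β / (4 * t)))
      refine h.congr_deriv ?_
      push_cast; ring
    have hE : HasDerivAt (fun y : ℝ => Real.exp (-(β * y ^ 2) / (4 * t)))
        (Real.exp (-(β * z ^ 2) / (4 * t)) * (-(β / (4 * t)) * (2 * z))) z := hin.exp
    have hlin : HasDerivAt (fun y : ℝ => -(β / (4 * t)) * (2 * y)) (-(β / (4 * t)) * 2) z := by
      have hfe : (fun y : ℝ => -(β / (4 * t)) * (2 * y)) = fun y => (-(β / (4 * t)) * 2) * y := by
        funext y; ring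
      rw [hfe]
      simpa using (hasDerivAt_id z).const_mul (-(β / (4 * t)) * 2)
    have hP : HasDerivAt (fun y : ℝ => c₁ * t ^ a + K * y ^ p * t ^ b)
        (K * (p * z ^ (p - 1)) * t ^ b) z := by
      have h := ((Real.hasDerivAt_rpow_const (x := z) (p := p) (Or.inl hz.ne')).const_mul
        K).mul_const (t ^ b)
      exact h.const_add (c₁ * t ^ a)
    have hR : HasDerivAt (fun y : ℝ => K * (p * y ^ (p - 1)) * t ^ b)
        (K * (p * ((p - 1) * z ^ (p - 1 - 1))) * t ^ b) z := by
      have h := (((Real.hasDerivAt_rpow_const (x := z) (p := p - 1)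
        (Or.inl hz.ne')).const_mul p).const_mul K).mul_const (t ^ b)
      convert h using 1 <;> ring
    have hQ := ((hlin.mul hP).add hR)
    have := hE.mul hQ
    refine this.congr_deriv ?_
    simp only [Pi.mul_apply, Pi.add_apply]
  have hdv2 : deriv (deriv fun y => v y t) z =
      Real.exp (-(β * z ^ 2) / (4 * t)) * (-(β / (4 * t)) * (2 * z)) *
        (-(β / (4 * t)) * (2 * z) * (c₁ * t ^ a + K * z ^ p * t ^ b)
          + K * (p * z ^ (p - 1)) * t ^ b)
       + Real.exp (-(β * z ^ 2) / (4 * t)) *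
        ((-(β / (4 * t)) * 2) * (c₁ * t ^ a + K * z ^ p * t ^ b)
          + (-(β / (4 * t)) * (2 * z)) * (K * (p * z ^ (p - 1)) * t ^ b)
          + K * (p * ((p - 1) * z ^ (p - 1 - 1))) * t ^ b) := by
    have hev : (deriv fun y => v y t) =ᶠ[nhds z] fun x =>
        Real.exp (-(β * x ^ 2) / (4 * t)) *
        (-(β / (4 * t)) * (2 * x) * (c₁ * t ^ a + K * x ^ p * t ^ b)
          + K * (p * x ^ (p - 1)) * t ^ b) := by
      filter_upwards [eventually_gt_nhds hz] with x hx
      exact hdv1 x hx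
    rw [hev.deriv_eq, hzd2.deriv]
  -- t-derivative
  have htd : HasDerivAt (fun s => W z s)
      (Real.exp (-(β * z ^ 2) / (4 * t)) * (-(β * z ^ 2) / 4 * (-(t ^ 2)⁻¹)) *
        (c₁ * t ^ a + K * z ^ p * t ^ b)
       + Real.exp (-(β * z ^ 2) / (4 * t)) *
        (c₁ * (a * t ^ (a - 1)) + K * z ^ p * (b * t ^ (b - 1)))) t := by
    have hin : HasDerivAt (fun s : ℝ => -(β * z ^ 2) / (4 * s))
        (-(β * z ^ 2) / 4 * (-(t ^ 2)⁻¹)) t := by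
      have hfe : (fun s : ℝ => -(β * z ^ 2) / (4 * s)) = fun s => -(β * z ^ 2) / 4 * s⁻¹ := by
        funext s
        rw [div_eq_mul_inv, div_eq_mul_inv, mul_inv]
        ring
      rw [hfe]
      exact (hasDerivAt_inv ht.ne').const_mul (-(β * z ^ 2) / 4)
    have hE := hin.exp
    have hP : HasDerivAt (fun s : ℝ => c₁ * s ^ a + K * z ^ p * s ^ b)
        (c₁ * (a * t ^ (a - 1)) + K * z ^ p * (b * t ^ (b - 1))) t := by
      have h1 := (Real.hasDerivAt_rpow_const (x := t) (p := a) (Or.inl ht.ne')).const_mul c₁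
      have h2 := (Real.hasDerivAt_rpow_const (x := t) (p := b) (Or.inl ht.ne')).const_mul
        (K * z ^ p)
      exact h1.add h2
    exact hE.mul hP
  have hdvt : deriv (fun s => v z s) t =
      Real.exp (-(β * z ^ 2) / (4 * t)) * (-(β * z ^ 2) / 4 * (-(t ^ 2)⁻¹)) *
        (c₁ * t ^ a + K * z ^ p * t ^ b)
       + Real.exp (-(β * z ^ 2) / (4 * t)) *
        (c₁ * (a * t ^ (a - 1)) + K * z ^ p * (b * t ^ (b - 1))) := by
    have hev : (fun s => v z s) =ᶠ[nhds t] fun s => W z s := by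
      filter_upwards [eventually_gt_nhds ht] with s hs
      exact hvW z s hz hs
    rw [hev.deriv_eq, htd.deriv]
  rw [hdvt, hdv2, hdv1 z hz]
  -- algebraic identity
  have e2 : z ^ (p - 1) = z ^ (p - 1 - 1) * z := by
    rw [← Real.rpow_add_one hz.ne']
    congr 1; ring
  have e1 : z ^ p = z ^ (p - 1 - 1) * z * z := by
    rw [← Real.rpow_add_one hz.ne', ← Real.rpow_add_one hz.ne']
    congr 1; ring
  have e3 : t ^ a = t ^ (a - 1) * t := by
    rw [← Real.rpow_add_one ht.ne']
    congr 1; ring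
  have e4 : t ^ b = t ^ (b - 1) * t := by
    rw [← Real.rpow_add_one ht.ne']
    congr 1; ring
  rw [e1, e2, e3, e4, hb, hp, ha]
  field_simp
  ring
end

section
/- Let β > 0, c₁, c₂ ∈ ℝ. Define v(z,t) = t^{−1} · exp(−βz²/(4t)) · ( c₁ + c₂ ln(z/t) ) for z > 0, t > 0. Then v satisfies β v_t = v_zz + (1/z) v_z at every point (z,t) with z > 0, t > 0. -/
noncomputable def FF (β c₁ c₂ z t : ℝ) : ℝ :=
  t⁻¹ * Real.exp (-(β * z ^ 2) / (4 * t)) * (c₁ + c₂ * Real.log (z / t))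

noncomputable def Fz (β c₁ c₂ z t : ℝ) : ℝ :=
  t⁻¹ * Real.exp (-(β * z ^ 2) / (4 * t)) *
    (-(β * z) / (2 * t) * (c₁ + c₂ * Real.log (z / t)) + c₂ / z)

noncomputable def Fzz (β c₁ c₂ z t : ℝ) : ℝ :=
  t⁻¹ * Real.exp (-(β * z ^ 2) / (4 * t)) *
    (β ^ 2 * z ^ 2 * (c₁ + c₂ * Real.log (z / t)) / (4 * t ^ 2)
      - β * (c₁ + c₂ * Real.log (z / t)) / (2 * t) - β * c₂ / t - c₂ / z ^ 2)

noncomputable def Ft (β c₁ c₂ z t : ℝ) : ℝ :=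
  Real.exp (-(β * z ^ 2) / (4 * t)) *
    ((c₁ + c₂ * Real.log (z / t)) * (-(1 / t ^ 2) + β * z ^ 2 / (4 * t ^ 3)) - c₂ / t ^ 2)

lemma hasDerivAt_exp_z (β z t : ℝ) (ht : 0 < t) :
    HasDerivAt (fun z' => Real.exp (-(β * z' ^ 2) / (4 * t)))
      (Real.exp (-(β * z ^ 2) / (4 * t)) * (-(β * (2 * z)) / (4 * t))) z := by
  have h1 : HasDerivAt (fun z' : ℝ => -(β * z' ^ 2) / (4 * t)) (-(β * (2 * z)) / (4 * t)) z := by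
    have := (((hasDerivAt_pow 2 z).const_mul β).neg).div_const (4 * t)
    simpa using this
  exact h1.exp

lemma hasDerivAt_L_z (c₁ c₂ z t : ℝ) (hz : 0 < z) (ht : 0 < t) :
    HasDerivAt (fun z' => c₁ + c₂ * Real.log (z' / t)) (c₂ / z) z := by
  have h1 : HasDerivAt (fun z' : ℝ => z' / t) (1 / t) z := by
    simpa using (hasDerivAt_id z).div_const t
  have h2 := h1.log (by positivity : z / t ≠ 0)
  have h3 := (h2.const_mul c₂).const_add c₁
  refine h3.congr_deriv ?_
  field_simp

lemma hasDerivAt_F_z (β c₁ c₂ z t : ℝ) (hz : 0 < z) (ht : 0 < t) :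
    HasDerivAt (fun z' => FF β c₁ c₂ z' t) (Fz β c₁ c₂ z t) z := by
  have h := ((hasDerivAt_exp_z β z t ht).const_mul t⁻¹).mul (hasDerivAt_L_z c₁ c₂ z t hz ht)
  refine h.congr_deriv ?_
  unfold Fz
  field_simp
  ring

lemma hasDerivAt_Fz_z (β c₁ c₂ z t : ℝ) (hz : 0 < z) (ht : 0 < t) :
    HasDerivAt (fun z' => Fz β c₁ c₂ z' t) (Fzz β c₁ c₂ z t) z := by
  have hinner : HasDerivAt
      (fun z' => -(β * z') / (2 * t) * (c₁ + c₂ * Real.log (z' / t)) + c₂ / z')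
      (-(β) / (2 * t) * (c₁ + c₂ * Real.log (z / t)) + -(β * z) / (2 * t) * (c₂ / z)
        + (-(c₂ / z ^ 2))) z := by
    have ha : HasDerivAt (fun z' : ℝ => -(β * z') / (2 * t)) (-(β) / (2 * t)) z := by
      simpa using (((hasDerivAt_id z).const_mul β).neg).div_const (2 * t)
    have hb := ha.mul (hasDerivAt_L_z c₁ c₂ z t hz ht)
    have hc : HasDerivAt (fun z' : ℝ => c₂ / z') (-(c₂ / z ^ 2)) z := by
      have h := (hasDerivAt_inv hz.ne').const_mul c₂
      have he : (fun z' : ℝ => c₂ / z') = fun z' => c₂ * z'⁻¹ := by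
        funext x; rw [div_eq_mul_inv]
      rw [he]
      refine h.congr_deriv ?_
      ring
    exact hb.add hc
  have h := ((hasDerivAt_exp_z β z t ht).const_mul t⁻¹).mul hinner
  refine h.congr_deriv ?_
  unfold Fzz
  field_simp
  ring

lemma hasDerivAt_F_t (β c₁ c₂ z t : ℝ) (hz : 0 < z) (ht : 0 < t) :
    HasDerivAt (fun t' => FF β c₁ c₂ z t') (Ft β c₁ c₂ z t) t := by
  have hinv : HasDerivAt (fun t' : ℝ => t'⁻¹) (-(t ^ 2)⁻¹) t := hasDerivAt_inv ht.ne'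
  have hexp : HasDerivAt (fun t' => Real.exp (-(β * z ^ 2) / (4 * t')))
      (Real.exp (-(β * z ^ 2) / (4 * t)) *
        ((0 * (4 * t) - -(β * z ^ 2) * 4) / (4 * t) ^ 2)) t := by
    have h1 : HasDerivAt (fun t' : ℝ => -(β * z ^ 2) / (4 * t'))
        ((0 * (4 * t) - -(β * z ^ 2) * 4) / (4 * t) ^ 2) t := by
      have := (hasDerivAt_const t (-(β * z ^ 2))).fun_div
        ((hasDerivAt_id t).const_mul 4) (by positivity : (4 : ℝ) * t ≠ 0)
      simpa using this
    exact h1.exp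
  have hL : HasDerivAt (fun t' => c₁ + c₂ * Real.log (z / t'))
      (c₂ * ((0 * t - z * 1) / t ^ 2 / (z / t))) t := by
    have h1 : HasDerivAt (fun t' : ℝ => z / t') ((0 * t - z * 1) / t ^ 2) t := by
      simpa using (hasDerivAt_const t z).fun_div (hasDerivAt_id t) ht.ne'
    exact ((h1.log (by positivity : z / t ≠ 0)).const_mul c₂).const_add c₁
  have h := (hinv.fun_mul hexp).fun_mul hL
  refine h.congr_deriv ?_
  unfold Ft
  field_simp
  ring

/-- In the cylindrical case `ν = 1`, the invariant solution associated
with the projective generator `Ỹ₁`, namely `v(z,t) = t⁻¹ exp(−βz²/(4t)) (c₁ + c₂ ln(z/t))`,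
solves `β v_t = v_zz + (1/z) v_z` for `z, t > 0`. -/
theorem stmt6 (β c₁ c₂ : ℝ) (hβ : 0 < β)
    (v : ℝ → ℝ → ℝ)
    (hv : ∀ z t : ℝ, 0 < z → 0 < t →
      v z t = t⁻¹ * Real.exp (-(β * z ^ 2) / (4 * t)) * (c₁ + c₂ * Real.log (z / t))) :
    ∀ z t : ℝ, 0 < z → 0 < t →
      β * deriv (fun t' => v z t') t =
        deriv (deriv fun z' => v z' t) z + (1 / z) * deriv (fun z' => v z' t) z := by
  intro z t hz ht
  -- first: deriv in z of v equals Fz on the positive half line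
  have hderivz : ∀ z' ∈ Set.Ioi (0 : ℝ), deriv (fun z'' => v z'' t) z' = Fz β c₁ c₂ z' t := by
    intro z' hz'
    have heq : (fun z'' => v z'' t) =ᶠ[nhds z'] (fun z'' => FF β c₁ c₂ z'' t) := by
      filter_upwards [isOpen_Ioi.mem_nhds hz'] with x hx
      exact hv x t hx ht
    rw [heq.deriv_eq, (hasDerivAt_F_z β c₁ c₂ z' t hz' ht).deriv]
  have h1 : deriv (fun z'' => v z'' t) z = Fz β c₁ c₂ z t := hderivz z hz
  have h2 : deriv (deriv fun z' => v z' t) z = Fzz β c₁ c₂ z t := by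
    have heq : (deriv fun z' => v z' t) =ᶠ[nhds z] (fun z' => Fz β c₁ c₂ z' t) := by
      filter_upwards [isOpen_Ioi.mem_nhds (Set.mem_Ioi.mpr hz)] with x hx
      exact hderivz x hx
    rw [heq.deriv_eq, (hasDerivAt_Fz_z β c₁ c₂ z t hz ht).deriv]
  have h3 : deriv (fun t' => v z t') t = Ft β c₁ c₂ z t := by
    have heq : (fun t' => v z t') =ᶠ[nhds t] (fun t' => FF β c₁ c₂ z t') := by
      filter_upwards [isOpen_Ioi.mem_nhds (Set.mem_Ioi.mpr ht)] with x hx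
      exact hv z x hz hx
    rw [heq.deriv_eq, (hasDerivAt_F_t β c₁ c₂ z t hz ht).deriv]
  rw [h1, h2, h3]
  unfold Ft Fz Fzz
  field_simp
  ring
end

section
/- Let K : ℝ → ℝ be twice continuously differentiable with K(u) > 0 for all u, let J : ℝ → ℝ satisfy J'(u) = K(u) for all u, let A ≠ 0, D > 0, B ∈ ℝ, and let I ⊆ ℝ be an open interval on which A·J(u) + B > 0. Define C(u) = D K(u) (A J(u) + B)^{1/A} and F(u) = (A J(u) + B)/K(u) for u ∈ I. Then for all u ∈ I: (i) C'(u)/C(u) − K'(u)/K(u) = 1/F(u), and (ii) −F(u)·( C'(u) K'(u)/C(u) − K''(u) ) + K'(u) + K'(u) F'(u) + K(u) F''(u) = 0. -/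
/-- For the constitutive class `C(u) = D K(u) (A J(u) + B)^{1/A}` with
`A ≠ 0` (on an open interval where `A J(u) + B > 0`), the function
`F(u) = (A J(u) + B)/K(u)` satisfies `C'/C − K'/K = 1/F` and the compatibility condition
`−F (C'K'/C − K'') + K' + K'F' + K F'' = 0` ensuring the extra generator `Y₃`. -/
theorem stmt12 (A B D : ℝ) (hA : A ≠ 0) (hD : 0 < D)
    (K J : ℝ → ℝ) (hK : ContDiff ℝ 2 K) (hKpos : ∀ x, 0 < K x)
    (hJ : ∀ x, HasDerivAt J (K x) x)
    (a b : ℝ) (hpos : ∀ x ∈ Set.Ioo a b, 0 < A * J x + B)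
    (C F : ℝ → ℝ)
    (hC : ∀ x ∈ Set.Ioo a b, C x = D * K x * (A * J x + B) ^ (1 / A))
    (hF : ∀ x ∈ Set.Ioo a b, F x = (A * J x + B) / K x) :
    ∀ x ∈ Set.Ioo a b,
      deriv C x / C x - deriv K x / K x = 1 / F x ∧
      -(F x) * (deriv C x * deriv K x / C x - deriv (deriv K) x) +
        deriv K x + deriv K x * deriv F x + K x * deriv (deriv F) x = 0 := by
  have hKd : Differentiable ℝ K := hK.differentiable two_ne_zero
  have hK1 : ContDiff ℝ 1 (deriv K) := by
    have h2 : ContDiff ℝ (1 + 1) K := by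
      convert hK using 2
      norm_num
    exact (contDiff_succ_iff_deriv.mp h2).2.2
  have hKd1 : Differentiable ℝ (deriv K) := hK1.differentiable one_ne_zero
  -- globally defined first derivative of F₀ = g/K
  set φ : ℝ → ℝ := fun y =>
    (A * K y * K y - (A * J y + B) * deriv K y) / K y ^ 2 with hφ
  have hg : ∀ y, HasDerivAt (fun z => A * J z + B) (A * K y) y := fun y =>
    ((hJ y).const_mul A).add_const B
  have hF0 : ∀ y, HasDerivAt (fun z => (A * J z + B) / K z) (φ y) y := by
    intro y
    have := (hg y).fun_div (hKd y).hasDerivAt (hKpos y).ne'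
    simpa [hφ] using this
  intro x hx
  have hmem : Set.Ioo a b ∈ nhds x := isOpen_Ioo.mem_nhds hx
  have hCeq : C =ᶠ[nhds x] fun y => D * (K y * (A * J y + B) ^ (1 / A)) :=
    Filter.eventuallyEq_of_mem hmem (fun y hy => by rw [hC y hy]; ring)
  have hFeq : F =ᶠ[nhds x] fun y => (A * J y + B) / K y :=
    Filter.eventuallyEq_of_mem hmem hF
  have hgx : 0 < A * J x + B := hpos x hx
  have hkx : (0:ℝ) < K x := hKpos x
  set g : ℝ := A * J x + B
  set P : ℝ := g ^ (1 / A) with hP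
  have hPpos : 0 < P := Real.rpow_pos_of_pos hgx _
  -- deriv C x
  have hrp : HasDerivAt (fun z => (A * J z + B) ^ (1 / A))
      ((A * K x) * (1 / A) * g ^ (1 / A - 1)) x :=
    (hg x).rpow_const (Or.inl hgx.ne')
  have hC0 : HasDerivAt (fun y => D * (K y * (A * J y + B) ^ (1 / A)))
      (D * (deriv K x * P + K x * ((A * K x) * (1 / A) * g ^ (1 / A - 1)))) x :=
    ((hKd x).hasDerivAt.mul hrp).const_mul D
  have hdC : deriv C x =
      D * (deriv K x * P + K x * ((A * K x) * (1 / A) * g ^ (1 / A - 1))) := by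
    rw [hCeq.deriv_eq]; exact hC0.deriv
  -- deriv F x
  have hdF : deriv F x = φ x := by
    rw [hFeq.deriv_eq]; exact (hF0 x).deriv
  -- deriv F = φ eventually on Ioo
  have hdFeq : deriv F =ᶠ[nhds x] φ := by
    refine Filter.eventuallyEq_of_mem hmem (fun y hy => ?_)
    have : F =ᶠ[nhds y] fun z => (A * J z + B) / K z :=
      Filter.eventuallyEq_of_mem (isOpen_Ioo.mem_nhds hy) hF
    rw [this.deriv_eq]; exact (hF0 y).deriv
  -- deriv φ x
  have hnum := (((hKd x).hasDerivAt.const_mul A).fun_mul (hKd x).hasDerivAt).fun_sub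
      ((hg x).fun_mul (hKd1 x).hasDerivAt)
  have hden : HasDerivAt (fun y => K y ^ 2) (2 * K x ^ 1 * deriv K x) x := by
    simpa using (hKd x).hasDerivAt.fun_pow 2
  have hφ' := hnum.fun_div hden (show K x ^ 2 ≠ 0 by positivity)
  have hCx : C x = D * K x * P := hC x hx
  have hFx : F x = g / K x := hF x hx
  have hsub : g ^ (1 / A - 1) = P / g := by
    rw [hP, Real.rpow_sub hgx, Real.rpow_one]
  constructor
  · rw [hdC, hCx, hFx, hsub]
    field_simp
    ring
  · rw [hdC, hCx, hFx, hdF, hdFeq.deriv_eq, hφ'.deriv, hsub, hφ]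
    field_simp
    ring
end

section
/- Let K : ℝ → ℝ be twice continuously differentiable with K(u) > 0 for all u, let J : ℝ → ℝ satisfy J'(u) = K(u) for all u, let D > 0 and B ≠ 0. Define C(u) = D K(u) exp( J(u)/B ) and F(u) = B/K(u). Then for all u ∈ ℝ: (i) C'(u)/C(u) − K'(u)/K(u) = 1/F(u), and (ii) −F(u)·( C'(u) K'(u)/C(u) − K''(u) ) + K'(u) + K'(u) F'(u) + K(u) F''(u) = 0. -/
/-- For the degenerate constitutive class `C(u) = D K(u) exp(J(u)/B)`
with `B ≠ 0`, the function `F(u) = B/K(u)` satisfies `C'/C − K'/K = 1/F` and the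
compatibility condition `−F (C'K'/C − K'') + K' + K'F' + K F'' = 0` ensuring the extra
generator `Y₃` in the case `A = 0`. -/
theorem stmt13 (B D : ℝ) (hD : 0 < D) (hB : B ≠ 0)
    (K J : ℝ → ℝ) (hK : ContDiff ℝ 2 K) (hKpos : ∀ x, 0 < K x)
    (hJ : ∀ x, HasDerivAt J (K x) x)
    (C F : ℝ → ℝ)
    (hC : ∀ x : ℝ, C x = D * K x * Real.exp (J x / B))
    (hF : ∀ x : ℝ, F x = B / K x) :
    ∀ x : ℝ,
      deriv C x / C x - deriv K x / K x = 1 / F x ∧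
      -(F x) * (deriv C x * deriv K x / C x - deriv (deriv K) x) +
        deriv K x + deriv K x * deriv F x + K x * deriv (deriv F) x = 0 := by
  have hKd : Differentiable ℝ K := hK.differentiable (by norm_num)
  have hK2 : ContDiff ℝ ((1 : WithTop ℕ∞) + 1) K := by
    rw [show ((1 : WithTop ℕ∞) + 1) = 2 from rfl]; exact hK
  have hK'c : ContDiff ℝ 1 (deriv K) := (contDiff_succ_iff_deriv.mp hK2).2.2
  have hK'd : Differentiable ℝ (deriv K) := hK'c.differentiable one_ne_zero
  have hKne : ∀ x, K x ≠ 0 := fun x => (hKpos x).ne'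
  have hCeq : C = fun x => D * K x * Real.exp (J x / B) := funext hC
  have hFeq : F = fun x => B / K x := funext hF
  -- derivative of C
  have hCder : ∀ x, deriv C x
      = D * deriv K x * Real.exp (J x / B) + D * K x * (Real.exp (J x / B) * (K x / B)) := by
    intro x
    have h1 : HasDerivAt (fun x => D * K x) (D * deriv K x) x :=
      ((hKd x).hasDerivAt).const_mul D
    have h2 : HasDerivAt (fun x => Real.exp (J x / B)) (Real.exp (J x / B) * (K x / B)) x :=
      (((hJ x).div_const B).exp)
    have := h1.mul h2
    rw [hCeq]
    have h3 : HasDerivAt (fun x => D * K x * Real.exp (J x / B)) (D * deriv K x * Real.exp (J x / B) + D * K x * (Real.exp (J x / B) * (K x / B))) x := this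
    simpa using h3.deriv
  -- first derivative of F
  have hFder : ∀ x, deriv F x = -(B * deriv K x) / K x ^ 2 := by
    intro x
    have h : HasDerivAt (fun x => B / K x) ((0 * K x - B * deriv K x) / K x ^ 2) x := (hasDerivAt_const x B).div ((hKd x).hasDerivAt) (hKne x)
    rw [hFeq]
    rw [h.deriv]
    ring
  have hFder' : deriv F = fun x => -(B * deriv K x) / K x ^ 2 := funext hFder
  -- second derivative of F
  have hF2der : ∀ x, deriv (deriv F) x
      = (-(B * deriv (deriv K) x) * K x ^ 2 - -(B * deriv K x) * (2 * K x ^ 1 * deriv K x))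
        / (K x ^ 2) ^ 2 := by
    intro x
    have hnum : HasDerivAt (fun x => -(B * deriv K x)) (-(B * deriv (deriv K) x)) x :=
      (((hK'd x).hasDerivAt).const_mul B).neg
    have hden : HasDerivAt (fun x => K x ^ 2) (2 * K x ^ 1 * deriv K x) x := by
      simpa using ((hKd x).hasDerivAt).fun_pow 2
    have h := hnum.div hden (pow_ne_zero 2 (hKne x))
    rw [hFder']
    exact h.deriv
  intro x
  have hexp : Real.exp (J x / B) > 0 := Real.exp_pos _
  have hCx : C x = D * K x * Real.exp (J x / B) := hC x
  have hKx := hKpos x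
  have hCne : C x ≠ 0 := by
    rw [hCx]; positivity
  constructor
  · rw [hCder x, hF x, hCx]
    set e := Real.exp (J x / B) with he
    have hE : e ≠ 0 := hexp.ne'
    field_simp
    ring
  · rw [hCder x, hF x, hFder x, hF2der x, hCx]
    set e := Real.exp (J x / B) with he
    have hE : e ≠ 0 := hexp.ne'
    field_simp
    ring
end

section
/- Let ν > 0, A ≠ 0, D ≠ 0, B, Q ∈ ℝ, let K : ℝ → ℝ be continuously differentiable with K(u) > 0 for all u, and let J : ℝ → ℝ satisfy J'(u) = K(u) for all u. Define C(u) = D K(u) (A J(u) + B)^{1/A} on the set where A J(u)+B > 0. Let V ⊆ {(z,t) : z > 0, Q + (2(2A+1−ν)/D) t > 0} be open and let u : V → ℝ be twice continuously differentiable and satisfy the implicit relation A·J(u(z,t)) + B = z^{−2A} · ( Q + (2(2A+1−ν)/D) t )^{A} for all (z,t) ∈ V. Then u satisfies C(u) u_t = K'(u) (u_z)² + K(u) u_zz + (ν/z) K(u) u_z at every point of V. -/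
/-- Under the constitutive relation `C(u) = D K(u) (A J(u) + B)^{1/A}`
(`A ≠ 0`), any twice continuously differentiable function `u` satisfying the implicit
invariant relation `A J(u) + B = z^{−2A} (Q + (2(2A+1−ν)/D) t)^A` on an open set `V`
solves the nonlinear generalized heat equation on `V`. -/
theorem stmt14 (ν A B D Q : ℝ) (hν : 0 < ν) (hA : A ≠ 0) (hD : D ≠ 0)
    (K J C : ℝ → ℝ) (hK : ContDiff ℝ 1 K) (hKpos : ∀ x, 0 < K x)
    (hJ : ∀ x, HasDerivAt J (K x) x)
    (hC : ∀ x : ℝ, 0 < A * J x + B → C x = D * K x * (A * J x + B) ^ (1 / A))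
    (V : Set (ℝ × ℝ)) (hVopen : IsOpen V)
    (hVsub : V ⊆ {p : ℝ × ℝ | 0 < p.1 ∧ 0 < Q + (2 * (2 * A + 1 - ν) / D) * p.2})
    (u : ℝ → ℝ → ℝ)
    (hu : ContDiffOn ℝ 2 (fun p : ℝ × ℝ => u p.1 p.2) V)
    (hrel : ∀ z t : ℝ, (z, t) ∈ V →
      A * J (u z t) + B = z ^ (-(2 * A)) * (Q + (2 * (2 * A + 1 - ν) / D) * t) ^ A) :
    ∀ z t : ℝ, (z, t) ∈ V →
      C (u z t) * deriv (fun t' => u z t') t =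
        deriv K (u z t) * (deriv (fun z' => u z' t) z) ^ 2 +
        K (u z t) * deriv (deriv fun z' => u z' t) z +
        (ν / z) * K (u z t) * deriv (fun z' => u z' t) z := by
  intro z t hzt
  set c : ℝ := 2 * (2 * A + 1 - ν) / D with hc
  set s : ℝ := Q + c * t with hs_def
  clear_value s
  have hz : 0 < z := (hVsub hzt).1
  have hs : 0 < s := by rw [hs_def]; exact (hVsub hzt).2
  have hzne : z ≠ 0 := hz.ne'
  have hsne : s ≠ 0 := hs.ne'
  -- the slice in z
  set S : Set ℝ := {z' : ℝ | (z', t) ∈ V} with hS_def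
  have hSopen : IsOpen S := hVopen.preimage (continuous_id.prodMk continuous_const)
  have hzS : z ∈ S := hzt
  have hφC : ContDiffOn ℝ 2 (fun z' => u z' t) S := by
    have := hu.comp ((contDiff_id.prodMk contDiff_const).contDiffOn
      (s := S)) (fun x (hx : x ∈ S) => hx)
    exact fun x hx => this x hx
  have hφd : ∀ z' ∈ S, HasDerivAt (fun z'' => u z'' t) (deriv (fun z'' => u z'' t) z') z' := by
    intro z' hz'
    exact ((hφC.differentiableOn (by norm_num)).differentiableAt
      (hSopen.mem_nhds hz')).hasDerivAt
  have hφd2 : HasDerivAt (deriv fun z' => u z' t) (deriv (deriv fun z' => u z' t) z) z := by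
    have h1 : ContDiffOn ℝ 1 (deriv fun z' => u z' t) S :=
      hφC.deriv_of_isOpen hSopen (by norm_num)
    exact ((h1.differentiableOn (by norm_num)).differentiableAt
      (hSopen.mem_nhds hzS)).hasDerivAt
  -- the slice in t
  set T : Set ℝ := {t' : ℝ | (z, t') ∈ V} with hT_def
  have hTopen : IsOpen T := hVopen.preimage (continuous_const.prodMk continuous_id)
  have htT : t ∈ T := hzt
  have hψC : ContDiffOn ℝ 2 (fun t' => u z t') T := by
    have := hu.comp ((contDiff_const.prodMk contDiff_id).contDiffOn
      (s := T)) (fun x (hx : x ∈ T) => hx)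
    exact fun x hx => this x hx
  have hψd : HasDerivAt (fun t' => u z t') (deriv (fun t' => u z t') t) t :=
    ((hψC.differentiableOn (by norm_num)).differentiableAt
      (hTopen.mem_nhds htT)).hasDerivAt
  -- E1 : first spatial derivative, valid on all of S
  have key : ∀ z' ∈ S, K (u z' t) * deriv (fun z'' => u z'' t) z' =
      -2 * z' ^ (-(2 * A) - 1) * s ^ A := by
    intro z' hz'
    have hz'pos : 0 < z' := (hVsub hz').1
    have hL : HasDerivAt (fun x => A * J (u x t) + B)
        (A * (K (u z' t) * deriv (fun z'' => u z'' t) z')) z' :=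
      (((hJ (u z' t)).comp z' (hφd z' hz')).const_mul A).add_const B
    have hR : HasDerivAt (fun x : ℝ => x ^ (-(2 * A)) * s ^ A)
        ((-(2 * A)) * z' ^ (-(2 * A) - 1) * s ^ A) z' :=
      (Real.hasDerivAt_rpow_const (Or.inl hz'pos.ne')).mul_const _
    have heq : (fun x => A * J (u x t) + B) =ᶠ[nhds z']
        (fun x : ℝ => x ^ (-(2 * A)) * s ^ A) := by
      filter_upwards [hSopen.mem_nhds hz'] with x hx
      rw [hrel x t hx, hs_def]
    have huniq := hL.unique (hR.congr_of_eventuallyEq heq)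
    refine mul_left_cancel₀ hA ?_
    rw [huniq]; ring
  -- E2 : time derivative
  have keyt : A * (K (u z t) * deriv (fun t' => u z t') t) =
      z ^ (-(2 * A)) * (c * A * s ^ (A - 1)) := by
    have hL : HasDerivAt (fun t' => A * J (u z t') + B)
        (A * (K (u z t) * deriv (fun t' => u z t') t)) t :=
      (((hJ (u z t)).comp t hψd).const_mul A).add_const B
    have hinner : HasDerivAt (fun t' : ℝ => Q + c * t') c t := by
      simpa using ((hasDerivAt_id t).const_mul c).const_add Q
    have hpow : HasDerivAt (fun t' : ℝ => (Q + c * t') ^ A)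
        (c * A * (Q + c * t) ^ (A - 1)) t :=
      hinner.rpow_const (Or.inl (by rw [← hs_def]; exact hsne))
    have hR : HasDerivAt (fun t' : ℝ => z ^ (-(2 * A)) * (Q + c * t') ^ A)
        (z ^ (-(2 * A)) * (c * A * (Q + c * t) ^ (A - 1))) t := hpow.const_mul _
    have heq : (fun t' => A * J (u z t') + B) =ᶠ[nhds t]
        (fun t' : ℝ => z ^ (-(2 * A)) * (Q + c * t') ^ A) := by
      filter_upwards [hTopen.mem_nhds htT] with x hx
      exact hrel z x hx
    have huniq := hL.unique (hR.congr_of_eventuallyEq heq)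
    rw [huniq, ← hs_def]
  -- E3 : second spatial derivative
  have key2 : deriv K (u z t) * deriv (fun z' => u z' t) z * deriv (fun z' => u z' t) z +
      K (u z t) * deriv (deriv fun z' => u z' t) z =
      -2 * ((-(2 * A) - 1) * z ^ (-(2 * A) - 1 - 1)) * s ^ A := by
    have hKd : HasDerivAt K (deriv K (u z t)) (u z t) :=
      ((hK.differentiable one_ne_zero) (u z t)).hasDerivAt
    have hL : HasDerivAt (fun z' => K (u z' t) * deriv (fun z'' => u z'' t) z')
        (deriv K (u z t) * deriv (fun z' => u z' t) z * deriv (fun z' => u z' t) z +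
          K (u z t) * deriv (deriv fun z' => u z' t) z) z :=
      (hKd.comp z (hφd z hzS)).mul hφd2
    have hR : HasDerivAt (fun z' : ℝ => -2 * z' ^ (-(2 * A) - 1) * s ^ A)
        (-2 * ((-(2 * A) - 1) * z ^ (-(2 * A) - 1 - 1)) * s ^ A) z := by
      exact ((Real.hasDerivAt_rpow_const (p := -(2 * A) - 1)
        (Or.inl hzne)).const_mul (-2)).mul_const (s ^ A)
    have heq : (fun z' => K (u z' t) * deriv (fun z'' => u z'' t) z') =ᶠ[nhds z]
        (fun z' : ℝ => -2 * z' ^ (-(2 * A) - 1) * s ^ A) := by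
      filter_upwards [hSopen.mem_nhds hzS] with x hx
      exact key x hx
    exact hL.unique (hR.congr_of_eventuallyEq heq)
  -- positivity of A J(u) + B
  have hg : 0 < A * J (u z t) + B := by
    rw [hrel z t hzt, ← hs_def]
    have h1 : (0:ℝ) < z ^ (-(2 * A)) := Real.rpow_pos_of_pos hz _
    have h2 : (0:ℝ) < s ^ A := Real.rpow_pos_of_pos hs _
    positivity
  -- value of C
  have hCval : C (u z t) = D * K (u z t) * (1 / (z * z) * s) := by
    rw [hC _ hg, hrel z t hzt, ← hs_def]
    congr 1
    have hw2 : (0 : ℝ) < z ^ (-2 : ℝ) := Real.rpow_pos_of_pos hz _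
    have e1 : z ^ (-(2 * A)) = (z ^ (-2 : ℝ)) ^ A := by
      rw [← Real.rpow_mul hz.le]; ring_nf
    have e2 : z ^ (-2 : ℝ) = 1 / (z * z) := by
      rw [show (-2 : ℝ) = -1 + -1 by norm_num, Real.rpow_add hz, Real.rpow_neg_one]
      ring
    rw [e1, ← Real.mul_rpow hw2.le hs.le, ← Real.rpow_mul (by positivity),
      mul_one_div_cancel hA, Real.rpow_one, e2]
  -- power bookkeeping (division-free forms)
  have eA' : z ^ (-(2 * A) - 1) * z = z ^ (-(2 * A)) := by
    rw [Real.rpow_sub hz, Real.rpow_one, div_mul_cancel₀ _ hzne]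
  have eB' : z ^ (-(2 * A) - 1 - 1) * (z * z) = z ^ (-(2 * A)) := by
    rw [Real.rpow_sub hz, Real.rpow_sub hz, Real.rpow_one]
    field_simp
  have eC' : s ^ (A - 1) * s = s ^ A := by
    rw [Real.rpow_sub hs, Real.rpow_one, div_mul_cancel₀ _ hsne]
  have hk := (hKpos (u z t)).ne'
  have hkeyz := key z hzS
  have hkey' : K (u z t) * deriv (fun z' => u z' t) z * z =
      -2 * z ^ (-(2 * A)) * s ^ A := by
    linear_combination z * hkeyz - 2 * s ^ A * eA'
  have key2' : (deriv K (u z t) * deriv (fun z' => u z' t) z * deriv (fun z' => u z' t) z +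
      K (u z t) * deriv (deriv fun z' => u z' t) z) * (z * z) =
      -2 * (-(2 * A) - 1) * z ^ (-(2 * A)) * s ^ A := by
    linear_combination (z * z) * key2 - 2 * (-(2 * A) - 1) * s ^ A * eB'
  have hkr : K (u z t) * deriv (fun t' => u z t') t * s =
      z ^ (-(2 * A)) * c * s ^ A := by
    refine mul_left_cancel₀ hA ?_
    linear_combination s * keyt + z ^ (-(2 * A)) * c * A * eC'
  -- explicit values of the derivatives
  have hpp : deriv (fun z' => u z' t) z =
      -2 * z ^ (-(2 * A)) * s ^ A / (z * K (u z t)) := by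
    field_simp
    linear_combination hkey'
  have hrr : deriv (fun t' => u z t') t =
      z ^ (-(2 * A)) * c * s ^ A / (K (u z t) * s) := by
    field_simp
    linear_combination hkr
  have hqq : K (u z t) * deriv (deriv fun z' => u z' t) z =
      -2 * (-(2 * A) - 1) * z ^ (-(2 * A)) * s ^ A / (z * z) -
      deriv K (u z t) * deriv (fun z' => u z' t) z * deriv (fun z' => u z' t) z := by
    field_simp
    linear_combination key2'
  rw [hCval, hqq, hrr, hpp, hc]
  field_simp
  ring
end

section
/- Let ν > 0, D ≠ 0, B ≠ 0, Q ∈ ℝ, let K : ℝ → ℝ be continuously differentiable with K(u) > 0 for all u, and let J : ℝ → ℝ satisfy J'(u) = K(u) for all u. Define C(u) = D K(u) exp( J(u)/B ). Let V ⊆ {(z,t) : z > 0, Q + (2(1−ν)/D) t > 0} be open and let u : V → ℝ be twice continuously differentiable and satisfy J(u(z,t)) = −2B ln z + B ln( Q + (2(1−ν)/D) t ) for all (z,t) ∈ V. Then u satisfies C(u) u_t = K'(u) (u_z)² + K(u) u_zz + (ν/z) K(u) u_z at every point of V. -/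
/-- Under the degenerate constitutive relation
`C(u) = D K(u) exp(J(u)/B)` (`B ≠ 0`), any twice continuously differentiable function `u`
satisfying the logarithmic invariant relation
`J(u) = −2B ln z + B ln(Q + (2(1−ν)/D) t)` on an open set `V` solves the nonlinear
generalized heat equation on `V`. -/
theorem stmt15 (ν B D Q : ℝ) (hν : 0 < ν) (hD : D ≠ 0) (hB : B ≠ 0)
    (K J C : ℝ → ℝ) (hK : ContDiff ℝ 1 K) (hKpos : ∀ x, 0 < K x)
    (hJ : ∀ x, HasDerivAt J (K x) x)
    (hC : ∀ x : ℝ, C x = D * K x * Real.exp (J x / B))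
    (V : Set (ℝ × ℝ)) (hVopen : IsOpen V)
    (hVsub : V ⊆ {p : ℝ × ℝ | 0 < p.1 ∧ 0 < Q + (2 * (1 - ν) / D) * p.2})
    (u : ℝ → ℝ → ℝ)
    (hu : ContDiffOn ℝ 2 (fun p : ℝ × ℝ => u p.1 p.2) V)
    (hrel : ∀ z t : ℝ, (z, t) ∈ V →
      J (u z t) = -2 * B * Real.log z + B * Real.log (Q + (2 * (1 - ν) / D) * t)) :
    ∀ z t : ℝ, (z, t) ∈ V →
      C (u z t) * deriv (fun t' => u z t') t =
        deriv K (u z t) * (deriv (fun z' => u z' t) z) ^ 2 +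
        K (u z t) * deriv (deriv fun z' => u z' t) z +
        (ν / z) * K (u z t) * deriv (fun z' => u z' t) z := by
  intro z t hzt
  obtain ⟨hz, hq⟩ := hVsub hzt
  set a : ℝ := 2 * (1 - ν) / D with ha
  set q : ℝ := Q + a * t with hqdef
  have hq0 : q ≠ 0 := hq.ne'
  have hz0 : z ≠ 0 := hz.ne'
  have hrelz : ∀ y, (y, t) ∈ V → J (u y t) = -2 * B * Real.log y + B * Real.log q := by
    intro y hy; rw [hrel y t hy, hqdef, ha]
  have hrelt : ∀ y, (z, y) ∈ V →
      J (u z y) = -2 * B * Real.log z + B * Real.log (Q + a * y) := by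
    intro y hy; rw [hrel z y hy, ha]
  -- z-slice
  set s : Set ℝ := (fun w : ℝ => (w, t)) ⁻¹' V with hsdef
  have hsopen : IsOpen s := hVopen.preimage (continuous_id.prodMk continuous_const)
  have hzs : z ∈ s := hzt
  have hfz : ContDiffOn ℝ 2 (fun w => u w t) s :=
    hu.comp ((contDiff_id.prodMk contDiff_const).contDiffOn) (fun w hw => hw)
  have hfz_deriv : ∀ w ∈ s, HasDerivAt (fun w' => u w' t)
      (deriv (fun w' => u w' t) w) w := by
    intro w hw
    exact (((hfz w hw).contDiffAt (hsopen.mem_nhds hw)).differentiableAt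
      (by norm_num)).hasDerivAt
  -- first derivative relation in z, valid on all of s
  have hKz : ∀ w ∈ s, K (u w t) * deriv (fun w' => u w' t) w = -2 * B * w⁻¹ := by
    intro w hw
    have hw0 : 0 < w := (hVsub hw).1
    have hL : HasDerivAt (fun w' => J (u w' t))
        (K (u w t) * deriv (fun w' => u w' t) w) w :=
      (hJ (u w t)).comp w (hfz_deriv w hw)
    have hR : HasDerivAt (fun w' => -2 * B * Real.log w' + B * Real.log q)
        (-2 * B * w⁻¹) w :=
      ((Real.hasDerivAt_log hw0.ne').const_mul (-2 * B)).add_const _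
    have heq : (fun w' => J (u w' t)) =ᶠ[nhds w]
        (fun w' => -2 * B * Real.log w' + B * Real.log q) :=
      Filter.eventually_of_mem (hsopen.mem_nhds hw) (fun y hy => hrelz y hy)
    exact hL.unique (hR.congr_of_eventuallyEq heq)
  -- second derivative relation in z at the point
  have hg : ContDiffOn ℝ 1 (deriv (fun w' => u w' t)) s :=
    hfz.deriv_of_isOpen hsopen (by norm_num)
  have hgd : HasDerivAt (deriv (fun w' => u w' t))
      (deriv (deriv (fun w' => u w' t)) z) z :=
    (((hg z hzs).contDiffAt (hsopen.mem_nhds hzs)).differentiableAt one_ne_zero).hasDerivAt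
  have hKc : HasDerivAt (fun w => K (u w t))
      (deriv K (u z t) * deriv (fun w' => u w' t) z) z :=
    ((hK.differentiable one_ne_zero (u z t)).hasDerivAt).comp z (hfz_deriv z hzs)
  have hL2 : HasDerivAt (fun w => K (u w t) * deriv (fun w' => u w' t) w)
      (deriv K (u z t) * deriv (fun w' => u w' t) z * deriv (fun w' => u w' t) z
        + K (u z t) * deriv (deriv (fun w' => u w' t)) z) z := hKc.mul hgd
  have hR2 : HasDerivAt (fun w : ℝ => -2 * B * w⁻¹) (-2 * B * -(z ^ 2)⁻¹) z :=
    (hasDerivAt_inv hz0).const_mul (-2 * B)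
  have heq2 : (fun w => K (u w t) * deriv (fun w' => u w' t) w) =ᶠ[nhds z]
      (fun w : ℝ => -2 * B * w⁻¹) :=
    Filter.eventually_of_mem (hsopen.mem_nhds hzs) hKz
  have h2nd : deriv K (u z t) * deriv (fun w' => u w' t) z * deriv (fun w' => u w' t) z
      + K (u z t) * deriv (deriv (fun w' => u w' t)) z = -2 * B * -(z ^ 2)⁻¹ :=
    hL2.unique (hR2.congr_of_eventuallyEq heq2)
  -- t-slice
  set r : Set ℝ := (fun t' : ℝ => (z, t')) ⁻¹' V with hrdef
  have hropen : IsOpen r := hVopen.preimage (continuous_const.prodMk continuous_id)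
  have htr : t ∈ r := hzt
  have hft : ContDiffOn ℝ 2 (fun t' => u z t') r :=
    hu.comp ((contDiff_const.prodMk contDiff_id).contDiffOn) (fun w hw => hw)
  have hft_deriv : HasDerivAt (fun t' => u z t') (deriv (fun t' => u z t') t) t :=
    (((hft t htr).contDiffAt (hropen.mem_nhds htr)).differentiableAt
      (by norm_num)).hasDerivAt
  have hKt : K (u z t) * deriv (fun t' => u z t') t = B * (q⁻¹ * a) := by
    have hL : HasDerivAt (fun t' => J (u z t'))
        (K (u z t) * deriv (fun t' => u z t') t) t :=
      (hJ (u z t)).comp t hft_deriv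
    have hinner : HasDerivAt (fun t' : ℝ => Q + a * t') a t := by
      simpa using ((hasDerivAt_id t).const_mul a).const_add Q
    have hlog : HasDerivAt (fun t' : ℝ => Real.log (Q + a * t')) (q⁻¹ * a) t := by
      have := (Real.hasDerivAt_log hq0).comp t hinner
      simpa [hqdef, Function.comp_def] using this
    have hR : HasDerivAt (fun t' : ℝ => -2 * B * Real.log z + B * Real.log (Q + a * t'))
        (B * (q⁻¹ * a)) t := (hlog.const_mul B).const_add _
    have heq : (fun t' => J (u z t')) =ᶠ[nhds t]
        (fun t' : ℝ => -2 * B * Real.log z + B * Real.log (Q + a * t')) :=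
      Filter.eventually_of_mem (hropen.mem_nhds htr) (fun y hy => hrelt y hy)
    exact hL.unique (hR.congr_of_eventuallyEq heq)
  -- the exponential factor
  have hexp : Real.exp (J (u z t) / B) = (z ^ 2)⁻¹ * q := by
    have h1 : J (u z t) = -2 * B * Real.log z + B * Real.log q := hrelz z hzt
    have h2 : J (u z t) / B = Real.log ((z ^ 2)⁻¹) + Real.log q := by
      rw [h1, Real.log_inv, Real.log_pow]
      field_simp
      ring
    rw [h2, Real.exp_add, Real.exp_log (by positivity), Real.exp_log hq]
  -- assemble
  rw [hC (u z t), hexp]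
  have hzrel := hKz z hzs
  calc
    D * K (u z t) * ((z ^ 2)⁻¹ * q) * deriv (fun t' => u z t') t
        = D * ((z ^ 2)⁻¹ * q) * (K (u z t) * deriv (fun t' => u z t') t) := by ring
    _ = D * ((z ^ 2)⁻¹ * q) * (B * (q⁻¹ * a)) := by rw [hKt]
    _ = 2 * B * (1 - ν) * (z ^ 2)⁻¹ := by rw [ha]; field_simp
    _ = -2 * B * -(z ^ 2)⁻¹ + (ν / z) * (-2 * B * z⁻¹) := by field_simp; ring
    _ = (deriv K (u z t) * deriv (fun z' => u z' t) z * deriv (fun z' => u z' t) z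
          + K (u z t) * deriv (deriv fun z' => u z' t) z)
        + (ν / z) * (K (u z t) * deriv (fun z' => u z' t) z) := by rw [h2nd, hzrel]
    _ = deriv K (u z t) * (deriv (fun z' => u z' t) z) ^ 2 +
        K (u z t) * deriv (deriv fun z' => u z' t) z +
        (ν / z) * K (u z t) * deriv (fun z' => u z' t) z := by ring
end

section
/- Let ν > 0, k₀ > 0, c₀ > 0, m, n ∈ ℝ with n > m and m ≠ −1, and Q ∈ ℝ. Set A = (m+1)/(n−m) and D = (c₀/k₀) · ( k₀/(n−m) )^{−(n−m)/(m+1)}. Define u(z,t) = [ ((n−m)/k₀) · z^{−2A} · ( Q + (2(2A+1−ν)/D) t )^{A} ]^{1/(m+1)} on V = {(z,t) : z > 0, Q + (2(2A+1−ν)/D) t > 0}. Then u(z,t) > 0 on V and u satisfies the power-law generalized heat equation c₀ u^{n} u_t = k₀ m u^{m−1} (u_z)² + k₀ u^{m} u_zz + (ν/z) k₀ u^{m} u_z at every point of V. -/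
/-- Power-law coefficients `K(u) = k₀u^m`, `C(u) = c₀u^n` with `n > m`,
`m ≠ −1`: with `A = (m+1)/(n−m)` and `D = (c₀/k₀)(k₀/(n−m))^{−(n−m)/(m+1)}`, the explicit
similarity solution `u(z,t) = [((n−m)/k₀) z^{−2A} (Q + (2(2A+1−ν)/D) t)^A]^{1/(m+1)}`
is positive and solves the power-law generalized heat equation on
`V = {(z,t) : z > 0, Q + (2(2A+1−ν)/D) t > 0}`. -/
theorem stmt16 (ν k₀ c₀ m n Q A D : ℝ) (hν : 0 < ν) (hk₀ : 0 < k₀) (hc₀ : 0 < c₀)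
    (hnm : m < n) (hm : m ≠ -1)
    (hA : A = (m + 1) / (n - m))
    (hD : D = (c₀ / k₀) * (k₀ / (n - m)) ^ (-(n - m) / (m + 1)))
    (u : ℝ → ℝ → ℝ)
    (hu : ∀ z t : ℝ, 0 < z → 0 < Q + (2 * (2 * A + 1 - ν) / D) * t →
      u z t = (((n - m) / k₀) * z ^ (-(2 * A)) *
        (Q + (2 * (2 * A + 1 - ν) / D) * t) ^ A) ^ (1 / (m + 1))) :
    ∀ z t : ℝ, 0 < z → 0 < Q + (2 * (2 * A + 1 - ν) / D) * t →
      0 < u z t ∧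
      c₀ * u z t ^ n * deriv (fun t' => u z t') t =
        k₀ * m * u z t ^ (m - 1) * (deriv (fun z' => u z' t) z) ^ 2 +
        k₀ * u z t ^ m * deriv (deriv fun z' => u z' t) z +
        (ν / z) * k₀ * u z t ^ m * deriv (fun z' => u z' t) z := by
  have hs : 0 < n - m := by linarith
  have hs' : n - m ≠ 0 := ne_of_gt hs
  have hm1 : m + 1 ≠ 0 := fun h => hm (by linarith)
  have hDpos : 0 < D := by
    rw [hD]; positivity
  set lam : ℝ := 2 * (2 * A + 1 - ν) / D with hlam
  set c : ℝ := ((n - m) / k₀) ^ (1 / (m + 1)) with hc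
  have hcpos : 0 < c := Real.rpow_pos_of_pos (div_pos hs hk₀) _
  set a : ℝ := -2 / (n - m) with ha
  set b : ℝ := 1 / (n - m) with hb
  have has : a * (n - m) = -2 := by rw [ha]; field_simp
  have hbs : b * (n - m) = 1 := by rw [hb]; field_simp
  -- value lemma
  have hval : ∀ z' t' : ℝ, 0 < z' → 0 < Q + lam * t' →
      u z' t' = c * z' ^ a * (Q + lam * t') ^ b := by
    intro z' t' hz' hP'
    rw [hu z' t' hz' hP']
    rw [Real.mul_rpow (mul_nonneg (div_pos hs hk₀).le (Real.rpow_pos_of_pos hz' _).le)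
        (Real.rpow_pos_of_pos hP' _).le,
      Real.mul_rpow (div_pos hs hk₀).le (Real.rpow_pos_of_pos hz' _).le,
      ← Real.rpow_mul hz'.le, ← Real.rpow_mul hP'.le]
    have e1 : -(2 * A) * (1 / (m + 1)) = a := by
      rw [hA, ha]; field_simp
    have e2 : A * (1 / (m + 1)) = b := by
      rw [hA, hb]; field_simp
    rw [e1, e2]
  intro z t hz hP
  have huval := hval z t hz hP
  have hP' := hP
  have hupos : 0 < u z t := by
    rw [huval]; positivity
  refine ⟨hupos, ?_⟩
  set P : ℝ := Q + lam * t with hPdef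
  -- time derivative
  have hdt : deriv (fun t' => u z t') t = c * z ^ a * (lam * b * P ^ (b - 1)) := by
    have hev : (fun t' => u z t') =ᶠ[nhds t]
        fun t' => c * z ^ a * (Q + lam * t') ^ b := by
      have hopen : IsOpen {t' : ℝ | 0 < Q + lam * t'} :=
        isOpen_lt continuous_const (continuous_const.add (continuous_const.mul continuous_id))
      filter_upwards [hopen.mem_nhds hP] with t' ht'
      exact hval z t' hz ht'
    rw [hev.deriv_eq]
    have h1 : HasDerivAt (fun t' : ℝ => Q + lam * t') lam t := by
      simpa using ((hasDerivAt_id t).const_mul lam).const_add Q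
    have h2 := (h1.rpow_const (p := b) (Or.inl hP.ne')).const_mul (c * z ^ a)
    rw [h2.deriv]
  -- space derivative (on all of Ioi 0)
  have hdz : ∀ z' : ℝ, 0 < z' →
      deriv (fun w => u w t) z' = c * P ^ b * (a * z' ^ (a - 1)) := by
    intro z' hz'
    have hev : (fun w => u w t) =ᶠ[nhds z'] fun w => c * P ^ b * w ^ a := by
      filter_upwards [isOpen_Ioi.mem_nhds (Set.mem_Ioi.mpr hz')] with w hw
      rw [hval w t hw hP]; ring
    rw [hev.deriv_eq]
    have h1 := (Real.hasDerivAt_rpow_const (p := a) (Or.inl hz'.ne')).const_mul (c * P ^ b)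
    rw [h1.deriv]
  have hdz1 : deriv (fun z' => u z' t) z = c * P ^ b * (a * z ^ (a - 1)) := hdz z hz
  -- second space derivative
  have hdz2 : deriv (deriv fun z' => u z' t) z
      = c * P ^ b * a * ((a - 1) * z ^ (a - 2)) := by
    have hev : (deriv fun z' => u z' t) =ᶠ[nhds z]
        fun w => (c * P ^ b * a) * w ^ (a - 1) := by
      filter_upwards [isOpen_Ioi.mem_nhds (Set.mem_Ioi.mpr hz)] with w hw
      rw [hdz w hw]; ring
    rw [hev.deriv_eq]
    have h1 := (Real.hasDerivAt_rpow_const (p := a - 1) (Or.inl hz.ne')).const_mul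
      (c * P ^ b * a)
    rw [h1.deriv]
    ring_nf
  -- expansion of powers of u
  have expand : ∀ r : ℝ, u z t ^ r = c ^ r * z ^ (a * r) * P ^ (b * r) := by
    intro r
    rw [huval, Real.mul_rpow (by positivity) (by positivity),
      Real.mul_rpow (by positivity) (by positivity),
      ← Real.rpow_mul hz.le, ← Real.rpow_mul hP.le]
  rw [hdt, hdz1, hdz2, expand n, expand m, expand (m - 1)]
  -- coefficient identity: c₀ * c^(n+1) = k₀ * D * c^(m+1)
  have hcD : c₀ * c ^ (n + 1) = k₀ * D * c ^ (m + 1) := by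
    have h1 : c ^ (n + 1) = c ^ (m + 1) * c ^ (n - m) := by
      rw [← Real.rpow_add hcpos]; ring_nf
    have h2 : c ^ (n - m) = ((n - m) / k₀) ^ ((n - m) / (m + 1)) := by
      rw [hc, ← Real.rpow_mul (le_of_lt (div_pos hs hk₀))]
      ring_nf
    have h3 : (k₀ / (n - m)) ^ (-(n - m) / (m + 1))
        = ((n - m) / k₀) ^ ((n - m) / (m + 1)) := by
      rw [neg_div, Real.rpow_neg (by positivity), ← Real.inv_rpow (by positivity), inv_div]
    rw [h1, hD, h3, h2]
    field_simp
  -- merge exponents on both sides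
  -- coefficient identity for the final scalar equation
  have hscalar : c₀ * lam * b * c ^ (n + 1)
      = (k₀ * m * a ^ 2 + k₀ * a * (a - 1) + ν * k₀ * a) * c ^ (m + 1) := by
    rw [show c₀ * lam * b * c ^ (n + 1) = lam * b * (c₀ * c ^ (n + 1)) from by ring,
      hcD, hlam, hA, ha, hb]
    field_simp
    ring
  have hT1 : k₀ * m * (c ^ (m - 1) * z ^ (a * (m - 1)) * P ^ (b * (m - 1))) *
        (c * P ^ b * (a * z ^ (a - 1))) ^ 2
      = (k₀ * m * a ^ 2 * c ^ (m + 1)) * (z ^ (a * (m + 1) - 2) * P ^ (b * (m + 1))) := by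
    rw [show k₀ * m * (c ^ (m - 1) * z ^ (a * (m - 1)) * P ^ (b * (m - 1))) *
          (c * P ^ b * (a * z ^ (a - 1))) ^ 2
        = (k₀ * m * a ^ 2) * ((c ^ (m - 1) * (c ^ (1:ℝ) * c ^ (1:ℝ))) *
          ((z ^ (a * (m - 1)) * (z ^ (a - 1) * z ^ (a - 1))) *
           (P ^ (b * (m - 1)) * (P ^ b * P ^ b)))) from by rw [Real.rpow_one]; ring,
      ← Real.rpow_add hcpos, ← Real.rpow_add hcpos,
      ← Real.rpow_add hz, ← Real.rpow_add hz,
      ← Real.rpow_add hP, ← Real.rpow_add hP,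
      show m - 1 + ((1:ℝ) + 1) = m + 1 from by ring,
      show a * (m - 1) + (a - 1 + (a - 1)) = a * (m + 1) - 2 from by ring,
      show b * (m - 1) + (b + b) = b * (m + 1) from by ring]
    ring
  have hT2 : k₀ * (c ^ m * z ^ (a * m) * P ^ (b * m)) *
        (c * P ^ b * a * ((a - 1) * z ^ (a - 2)))
      = (k₀ * a * (a - 1) * c ^ (m + 1)) * (z ^ (a * (m + 1) - 2) * P ^ (b * (m + 1))) := by
    rw [show k₀ * (c ^ m * z ^ (a * m) * P ^ (b * m)) *
          (c * P ^ b * a * ((a - 1) * z ^ (a - 2)))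
        = (k₀ * a * (a - 1)) * ((c ^ m * c ^ (1:ℝ)) *
          ((z ^ (a * m) * z ^ (a - 2)) * (P ^ (b * m) * P ^ b))) from by
            rw [Real.rpow_one]; ring,
      ← Real.rpow_add hcpos, ← Real.rpow_add hz, ← Real.rpow_add hP,
      show m + (1:ℝ) = m + 1 from by ring,
      show a * m + (a - 2) = a * (m + 1) - 2 from by ring,
      show b * m + b = b * (m + 1) from by ring]
    ring
  have hT3 : ν / z * k₀ * (c ^ m * z ^ (a * m) * P ^ (b * m)) *
        (c * P ^ b * (a * z ^ (a - 1)))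
      = (ν * k₀ * a * c ^ (m + 1)) * (z ^ (a * (m + 1) - 2) * P ^ (b * (m + 1))) := by
    rw [show ν / z * k₀ * (c ^ m * z ^ (a * m) * P ^ (b * m)) *
          (c * P ^ b * (a * z ^ (a - 1)))
        = (ν * k₀ * a) * ((c ^ m * c ^ (1:ℝ)) *
          ((z ^ (a * m) * (z ^ (a - 1) * z ^ (-1:ℝ))) * (P ^ (b * m) * P ^ b))) from by
            rw [Real.rpow_one, Real.rpow_neg_one]; field_simp,
      ← Real.rpow_add hz, ← Real.rpow_add hcpos, ← Real.rpow_add hz, ← Real.rpow_add hP,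
      show m + (1:ℝ) = m + 1 from by ring,
      show a * m + (a - 1 + -1) = a * (m + 1) - 2 from by ring,
      show b * m + b = b * (m + 1) from by ring]
    ring
  calc c₀ * (c ^ n * z ^ (a * n) * P ^ (b * n)) * (c * z ^ a * (lam * b * P ^ (b - 1)))
      = (c₀ * lam * b) * ((c ^ n * c ^ (1:ℝ)) *
          ((z ^ (a * n) * z ^ a) * (P ^ (b * n) * P ^ (b - 1)))) := by
        rw [Real.rpow_one]; ring
    _ = (c₀ * lam * b * c ^ (n + 1)) * (z ^ (a * (m + 1) - 2) * P ^ (b * (m + 1))) := by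
        rw [← Real.rpow_add hcpos, ← Real.rpow_add hz, ← Real.rpow_add hP,
          show a * n + a = a * (m + 1) - 2 from by linear_combination has,
          show b * n + (b - 1) = b * (m + 1) from by linear_combination hbs]
        ring
    _ = ((k₀ * m * a ^ 2 + k₀ * a * (a - 1) + ν * k₀ * a) * c ^ (m + 1)) *
          (z ^ (a * (m + 1) - 2) * P ^ (b * (m + 1))) := by rw [hscalar]
    _ = k₀ * m * (c ^ (m - 1) * z ^ (a * (m - 1)) * P ^ (b * (m - 1))) *
          (c * P ^ b * (a * z ^ (a - 1))) ^ 2 +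
        k₀ * (c ^ m * z ^ (a * m) * P ^ (b * m)) *
          (c * P ^ b * a * ((a - 1) * z ^ (a - 2))) +
        ν / z * k₀ * (c ^ m * z ^ (a * m) * P ^ (b * m)) *
          (c * P ^ b * (a * z ^ (a - 1))) := by rw [hT1, hT2, hT3]; ring
end

section
/- Let ν > 0, k₀ > 0, c₀ > 0, λ ≠ 0, μ > λ, and Q ∈ ℝ. Set A = λ/(μ−λ) and D = (c₀/k₀) · ( k₀/(μ−λ) )^{−(μ−λ)/λ}. Define u(z,t) = (1/λ) · ln[ ((μ−λ)/k₀) · z^{−2A} · ( Q + (2(2A+1−ν)/D) t )^{A} ] on V = {(z,t) : z > 0, Q + (2(2A+1−ν)/D) t > 0}. Then u satisfies the exponential-coefficient generalized heat equation c₀ e^{μu} u_t = k₀ λ e^{λu} (u_z)² + k₀ e^{λu} u_zz + (ν/z) k₀ e^{λu} u_z at every point of V. -/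
set_option maxHeartbeats 1000000 in
/-- Exponential coefficients `K(u) = k₀e^{λu}`, `C(u) = c₀e^{μu}` with
`μ > λ`, `λ ≠ 0`: with `A = λ/(μ−λ)` and `D = (c₀/k₀)(k₀/(μ−λ))^{−(μ−λ)/λ}`, the explicit
similarity solution `u(z,t) = (1/λ) ln[((μ−λ)/k₀) z^{−2A} (Q + (2(2A+1−ν)/D) t)^A]`
solves the exponential-coefficient generalized heat equation on
`V = {(z,t) : z > 0, Q + (2(2A+1−ν)/D) t > 0}`. -/
theorem stmt17 (ν k₀ c₀ lam mu Q A D : ℝ) (hν : 0 < ν) (hk₀ : 0 < k₀) (hc₀ : 0 < c₀)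
    (hlam : lam ≠ 0) (hmu : lam < mu)
    (hA : A = lam / (mu - lam))
    (hD : D = (c₀ / k₀) * (k₀ / (mu - lam)) ^ (-(mu - lam) / lam))
    (u : ℝ → ℝ → ℝ)
    (hu : ∀ z t : ℝ, 0 < z → 0 < Q + (2 * (2 * A + 1 - ν) / D) * t →
      u z t = (1 / lam) * Real.log (((mu - lam) / k₀) * z ^ (-(2 * A)) *
        (Q + (2 * (2 * A + 1 - ν) / D) * t) ^ A)) :
    ∀ z t : ℝ, 0 < z → 0 < Q + (2 * (2 * A + 1 - ν) / D) * t →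
      c₀ * Real.exp (mu * u z t) * deriv (fun t' => u z t') t =
        k₀ * lam * Real.exp (lam * u z t) * (deriv (fun z' => u z' t) z) ^ 2 +
        k₀ * Real.exp (lam * u z t) * deriv (deriv fun z' => u z' t) z +
        (ν / z) * k₀ * Real.exp (lam * u z t) * deriv (fun z' => u z' t) z := by
  intro z t hz hSt
  set α : ℝ := 2 * (2 * A + 1 - ν) / D with hα
  set m : ℝ := mu - lam with hm
  have hm0 : 0 < m := sub_pos.mpr hmu
  set S : ℝ := Q + α * t with hSdef
  have hS : 0 < S := hSt
  have hC1 : 0 < m / k₀ := div_pos hm0 hk₀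
  have hAm : A * m = lam := by
    rw [hA]; field_simp
  have hA0 : A ≠ 0 := by
    intro h; rw [h, zero_mul] at hAm; exact hlam hAm.symm
  have hD0 : 0 < D := by
    rw [hD]; positivity
  -- log expansion
  have hlog : ∀ w s : ℝ, 0 < w → 0 < s →
      Real.log ((m / k₀) * w ^ (-(2 * A)) * s ^ A)
        = (Real.log (m / k₀) + A * Real.log s) + (-(2 * A)) * Real.log w := by
    intro w s hw hs
    rw [Real.log_mul (by positivity) (by positivity),
        Real.log_mul hC1.ne' (by positivity),
        Real.log_rpow hw, Real.log_rpow hs]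
    ring
  -- derivative in z at any positive point
  have hUz : ∀ w : ℝ, 0 < w → HasDerivAt (fun z' => u z' t)
      ((1 / lam) * (-(2 * A)) * w⁻¹) w := by
    intro w hw
    have hev : (fun z' => u z' t) =ᶠ[nhds w]
        (fun z' => (1 / lam) * ((Real.log (m / k₀) + A * Real.log S)
          + (-(2 * A)) * Real.log z')) := by
      filter_upwards [isOpen_Ioi.mem_nhds hw] with x hx
      rw [hu x t hx hSt, hlog x S hx hS]
    have hd : HasDerivAt (fun z' => (1 / lam) * ((Real.log (m / k₀) + A * Real.log S)
        + (-(2 * A)) * Real.log z')) ((1 / lam) * ((-(2 * A)) * w⁻¹)) w :=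
      (((Real.hasDerivAt_log hw.ne').const_mul (-(2 * A))).const_add
        (Real.log (m / k₀) + A * Real.log S)).const_mul (1 / lam)
    have := hd.congr_of_eventuallyEq hev
    exact this.congr_deriv (by ring)
  have hderiv1 : deriv (fun z' => u z' t) z = (1 / lam) * (-(2 * A)) * z⁻¹ :=
    (hUz z hz).deriv
  have hderfun : (deriv fun z' => u z' t) =ᶠ[nhds z]
      (fun w => (1 / lam) * (-(2 * A)) * w⁻¹) := by
    filter_upwards [isOpen_Ioi.mem_nhds hz] with x hx
    exact (hUz x hx).deriv
  have hderiv2 : deriv (deriv fun z' => u z' t) z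
      = (1 / lam) * (-(2 * A)) * (-(z ^ 2)⁻¹) := by
    rw [hderfun.deriv_eq]
    exact ((hasDerivAt_inv hz.ne').const_mul ((1 / lam) * (-(2 * A)))).deriv
  -- derivative in t
  have hderivT : deriv (fun t' => u z t') t = (1 / lam) * (A * (α / S)) := by
    have hopen : IsOpen {t' : ℝ | 0 < Q + α * t'} :=
      isOpen_lt continuous_const (by continuity)
    have hev : (fun t' => u z t') =ᶠ[nhds t]
        (fun t' => (1 / lam) * ((Real.log (m / k₀) + (-(2 * A)) * Real.log z)
          + A * Real.log (Q + α * t'))) := by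
      filter_upwards [hopen.mem_nhds hSt] with x hx
      rw [hu z x hz hx, hlog z (Q + α * x) hz hx]
      ring_nf
    have hinner : HasDerivAt (fun t' => Q + α * t') α t := by
      simpa using ((hasDerivAt_id t).const_mul α).const_add Q
    have hd : HasDerivAt (fun t' => (1 / lam) * ((Real.log (m / k₀)
        + (-(2 * A)) * Real.log z) + A * Real.log (Q + α * t')))
        ((1 / lam) * (A * (α / S))) t :=
      (((hinner.log hS.ne').const_mul A).const_add
        (Real.log (m / k₀) + (-(2 * A)) * Real.log z)).const_mul (1 / lam)
    exact (hd.congr_of_eventuallyEq hev).deriv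
  -- exponentials
  have hP : 0 < (m / k₀) * z ^ (-(2 * A)) * S ^ A := by positivity
  have hlamu : lam * u z t = Real.log ((m / k₀) * z ^ (-(2 * A)) * S ^ A) := by
    rw [hu z t hz hSt]; field_simp; rfl
  have hexplam : Real.exp (lam * u z t) = (m / k₀) * z ^ (-(2 * A)) * S ^ A := by
    rw [hlamu, Real.exp_log hP]
  have hAm' : A * (mu - lam) = lam := by rw [← hm]; exact hAm
  have e1 : A * (mu / lam) = A + 1 := by
    field_simp
    linear_combination hAm'
  have e2 : (-(2 * A)) * (mu / lam) = -(2 * A) - 2 := by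
    field_simp
    linear_combination (-1) * hAm'
  have hexpmu : Real.exp (mu * u z t)
      = (m / k₀) ^ (mu / lam) * z ^ (-(2 * A) - 2) * S ^ (A + 1) := by
    have h1 : mu * u z t = Real.log ((m / k₀) * z ^ (-(2 * A)) * S ^ A) * (mu / lam) := by
      rw [← hlamu]; field_simp
    rw [h1, ← Real.rpow_def_of_pos hP,
        Real.mul_rpow (by positivity) (by positivity),
        Real.mul_rpow (by positivity) (by positivity),
        ← Real.rpow_mul hz.le, ← Real.rpow_mul hS.le, e1, e2]
  -- rpow splitting
  have hz2 : z ^ (-(2 * A) - 2 : ℝ) = z ^ (-(2 * A)) / z ^ 2 := by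
    rw [Real.rpow_sub hz]
    norm_num
  have hS2 : S ^ (A + 1 : ℝ) = S ^ A * S := Real.rpow_add_one hS.ne' A
  -- key constant identity
  have hkm : (k₀ / m) ^ (-m / lam) = (m / k₀) ^ (m / lam) := by
    rw [show k₀ / m = (m / k₀)⁻¹ by rw [inv_div],
        Real.inv_rpow hC1.le, ← Real.rpow_neg hC1.le, neg_div, neg_neg]
  have hmul : mu / lam = 1 + m / lam := by
    rw [hm]; field_simp; ring
  have hc₂ : c₀ * (m / k₀) ^ (mu / lam) = D * m := by
    rw [hmul, Real.rpow_add hC1, Real.rpow_one, hD, hkm]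
    field_simp
  have hDα : α * D = 2 * (2 * A + 1 - ν) := by
    rw [hα]; field_simp
  have hkey : c₀ * (m / k₀) ^ (mu / lam) * α = 2 * (2 * A + 1 - ν) * m := by
    rw [hc₂]
    calc D * m * α = (α * D) * m := by ring
      _ = 2 * (2 * A + 1 - ν) * m := by rw [hDα]
  rw [hexplam, hexpmu, hderiv1, hderiv2, hderivT, hz2, hS2]
  set T1 := z ^ (-(2 * A) : ℝ) with hT1
  set T2 := S ^ (A : ℝ) with hT2
  set E := (m / k₀) ^ (mu / lam : ℝ) with hE
  rw [show lam = A * m from hAm.symm]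
  have expand : c₀ * (E * (T1 / z ^ 2) * (T2 * S)) * (1 / (A * m) * (A * (α / S)))
      = c₀ * E * α * (T1 * T2) / (m * z ^ 2) := by
    field_simp
  rw [expand, hkey]
  field_simp
  ring
end

section
/- Let β ∈ ℝ, let K : ℝ → ℝ be continuously differentiable with K(u) > 0 for all u, let J : ℝ → ℝ satisfy J'(u) = K(u) for all u, and set G(u) = J(u)/K(u). Define vector fields on ℝ³ (with coordinates (z,t,u)) by Ŷ₄(z,t,u) = (t, 0, −(βz/2 + t/z)·G(u)), Ŷ₅(z,t,u) = (1, 0, −G(u)/z), and Ŷ₆(z,t,u) = (0, 0, −G(u)). Then at every point p = (z,t,u) with z ≠ 0, the Lie bracket satisfies [Ŷ₄, Ŷ₅](p) = −(β/2) · Ŷ₆(p). -/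
/-- The commutator-table entry `[Ŷ₄, Ŷ₅] = −(β/2) Ŷ₆` for the
generators `Ŷ₄ = t∂_z − (βz/2 + t/z)(J(u)/K(u))∂_u`, `Ŷ₅ = ∂_z − (J(u)/K(u))/z ∂_u`,
`Ŷ₆ = −(J(u)/K(u))∂_u` of the spherical case `ν = 2`, where the Lie bracket of vector
fields `X, Y : ℝ³ → ℝ³` is `[X,Y](p) = DY(p)·X(p) − DX(p)·Y(p)`. -/
theorem stmt19 (β : ℝ)
    (K J : ℝ → ℝ) (hK : ContDiff ℝ 1 K) (hKpos : ∀ x, 0 < K x)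
    (hJ : ∀ x, HasDerivAt J (K x) x)
    (G : ℝ → ℝ) (hG : ∀ x, G x = J x / K x)
    (Y₄ Y₅ Y₆ : ℝ × ℝ × ℝ → ℝ × ℝ × ℝ)
    (hY₄ : ∀ p : ℝ × ℝ × ℝ, Y₄ p = (p.2.1, 0, -(β * p.1 / 2 + p.2.1 / p.1) * G p.2.2))
    (hY₅ : ∀ p : ℝ × ℝ × ℝ, Y₅ p = (1, 0, -(G p.2.2) / p.1))
    (hY₆ : ∀ p : ℝ × ℝ × ℝ, Y₆ p = (0, 0, -(G p.2.2))) :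
    ∀ p : ℝ × ℝ × ℝ, p.1 ≠ 0 →
      fderiv ℝ Y₅ p (Y₄ p) - fderiv ℝ Y₄ p (Y₅ p) = (-(β / 2)) • Y₆ p := by
  intro p hz
  have hGeq : G = fun x => J x / K x := funext hG
  have hKd : ∀ x, HasDerivAt K (deriv K x) x :=
    fun x => ((hK.differentiable one_ne_zero) x).hasDerivAt
  set u := p.2.2 with hu
  set g' : ℝ := (K u * K u - J u * deriv K u) / K u ^ 2 with hg'
  have hGd : HasDerivAt G g' u := by
    rw [hGeq]; exact (hJ u).div (hKd u) (ne_of_gt (hKpos u))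
  -- building blocks
  have hsnd2 : HasFDerivAt (fun q : ℝ × ℝ × ℝ => q.2.2)
      ((ContinuousLinearMap.snd ℝ ℝ ℝ).comp (ContinuousLinearMap.snd ℝ ℝ (ℝ × ℝ))) p :=
    (hasFDerivAt_snd.comp p hasFDerivAt_snd)
  have hsnd1 : HasFDerivAt (fun q : ℝ × ℝ × ℝ => q.2.1)
      ((ContinuousLinearMap.fst ℝ ℝ ℝ).comp (ContinuousLinearMap.snd ℝ ℝ (ℝ × ℝ))) p :=
    (hasFDerivAt_fst.comp p hasFDerivAt_snd)
  have hGc : HasFDerivAt (fun q : ℝ × ℝ × ℝ => G q.2.2)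
      (((1 : ℝ →L[ℝ] ℝ).smulRight g').comp
        ((ContinuousLinearMap.snd ℝ ℝ ℝ).comp (ContinuousLinearMap.snd ℝ ℝ (ℝ × ℝ)))) p :=
    (hGd.hasFDerivAt).comp p hsnd2
  have hinv : HasFDerivAt (fun q : ℝ × ℝ × ℝ => (q.1)⁻¹)
      (((1 : ℝ →L[ℝ] ℝ).smulRight (-(p.1 ^ 2)⁻¹)).comp (ContinuousLinearMap.fst ℝ ℝ (ℝ × ℝ))) p :=
    ((hasDerivAt_inv hz).hasFDerivAt).comp p hasFDerivAt_fst
  -- Y₅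
  have hY₅' : Y₅ = fun q : ℝ × ℝ × ℝ => ((1 : ℝ), (0 : ℝ), -G q.2.2 * (q.1)⁻¹) := by
    funext q; rw [hY₅ q, div_eq_mul_inv]
  have h5 := (HasFDerivAt.prodMk (hasFDerivAt_const (1 : ℝ) p)
    (HasFDerivAt.prodMk (hasFDerivAt_const (0 : ℝ) p) (hGc.fun_neg.fun_mul hinv)))
  rw [← hY₅'] at h5
  -- Y₄
  have hY₄' : Y₄ = fun q : ℝ × ℝ × ℝ =>
      (q.2.1, (0 : ℝ), -((β / 2 * q.1 + q.2.1 * (q.1)⁻¹) * G q.2.2)) := by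
    funext q; rw [hY₄ q]; simp only [Prod.mk.injEq]
    refine ⟨trivial, trivial, ?_⟩; rw [div_eq_mul_inv q.2.1]; ring
  have hA : HasFDerivAt (fun q : ℝ × ℝ × ℝ => β / 2 * q.1)
      (((β / 2) • ContinuousLinearMap.fst ℝ ℝ (ℝ × ℝ) : ℝ × ℝ × ℝ →L[ℝ] ℝ)) p :=
    hasFDerivAt_fst.const_mul (β/2)
  have hB := hsnd1.fun_mul hinv
  have h4 := hsnd1.prodMk (HasFDerivAt.prodMk (hasFDerivAt_const (0:ℝ) p) (((hA.fun_add hB).fun_mul hGc).fun_neg))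
  rw [← hY₄'] at h4
  rw [h5.fderiv, h4.fderiv, hY₄ p, hY₅ p, hY₆ p]
  simp only [ContinuousLinearMap.prod_apply, ContinuousLinearMap.comp_apply,
    ContinuousLinearMap.smulRight_apply, ContinuousLinearMap.coe_fst',
    ContinuousLinearMap.coe_snd', ContinuousLinearMap.add_apply,
    ContinuousLinearMap.neg_apply, ContinuousLinearMap.smul_apply,
    ContinuousLinearMap.zero_apply, ContinuousLinearMap.one_apply,
    Prod.smul_mk, Prod.mk_sub_mk, smul_eq_mul]
  refine Prod.ext ?_ (Prod.ext ?_ ?_)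
  · simp
  · simp
  · simp only []
    field_simp
    ring
end
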